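/- arXiv:math/0507178 — 2 statements merged into one kernel-verified Lean document; each statement's English description precedes it below -/
import Mathlib

section
/- Let Γ be a semi-Markov kernel on a finite set S (Σ_{β,x} Γ_{α,β}(x) = 1 for all α) defining a Markov renewal process with positive transition matrix, and let ν = (ζ_α ξ_α) be the invariant law of the modulating chain. If the mean μ := Σ_{α,β} Σ_x x ν_α Γ_{α,β}(x) is finite and the kernel is supported on x ≡ β − α mod T (periodic, aperiodic within each class), then the Markov–Green function U_{α,β}(x) := Σ_{k≥1} P_α(τ_k = x, J_k = β) converges: U_{α,β}(x) → T ν_β / μ as x → ∞ along x ≡ β − α mod T. -/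
open Filter Matrix

/-- Convolution of two matrix-valued kernels on `ℕ`. -/
noncomputable def kconv {S : Type*} [Fintype S]
    (F G : ℕ → Matrix S S ℝ) : ℕ → Matrix S S ℝ :=
  fun x => ∑ y ∈ Finset.range (x + 1), F y * G (x - y)

/-- `n`-fold convolution power of a kernel; `kpow M 0` is the identity kernel
concentrated at `x = 0`. -/
noncomputable def kpow {S : Type*} [Fintype S] [DecidableEq S]
    (M : ℕ → Matrix S S ℝ) : ℕ → ℕ → Matrix S S ℝ
  | 0 => fun x => if x = 0 then 1 else 0
  | n + 1 => kconv M (kpow M n)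


namespace MRT

variable {S : Type*} [Fintype S] [DecidableEq S]

lemma kconv_eq_coeff (F G : ℕ → Matrix S S ℝ) (x : ℕ) :
    kconv F G x = PowerSeries.coeff x (PowerSeries.mk F * PowerSeries.mk G) := by
  rw [PowerSeries.coeff_mul, Finset.Nat.sum_antidiagonal_eq_sum_range_succ_mk]
  simp [kconv]

lemma mk_kpow (M : ℕ → Matrix S S ℝ) (n : ℕ) :
    PowerSeries.mk (kpow M n) = (PowerSeries.mk M) ^ n := by
  induction n with
  | zero =>
    apply PowerSeries.ext; intro x
    rw [PowerSeries.coeff_mk, pow_zero, PowerSeries.coeff_one]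
    show (if x = 0 then (1 : Matrix S S ℝ) else 0) = _
    rfl
  | succ n ih =>
    apply PowerSeries.ext; intro x
    rw [PowerSeries.coeff_mk, pow_succ']
    show kconv M (kpow M n) x = _
    rw [kconv_eq_coeff, ih]

lemma kpow_eq_coeff (M : ℕ → Matrix S S ℝ) (n x : ℕ) :
    kpow M n x = PowerSeries.coeff x ((PowerSeries.mk M) ^ n) := by
  rw [← mk_kpow, PowerSeries.coeff_mk]

lemma kpow_succ_right (M : ℕ → Matrix S S ℝ) (n : ℕ) :
    kpow M (n + 1) = kconv (kpow M n) M := by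
  funext x
  rw [kpow_eq_coeff, kconv_eq_coeff, mk_kpow, pow_succ]

lemma kconv_apply (F G : ℕ → Matrix S S ℝ) (x : ℕ) (α β : S) :
    kconv F G x α β
      = ∑ y ∈ Finset.range (x + 1), ∑ γ, F y α γ * G (x - y) γ β := by
  simp [kconv, Matrix.sum_apply, Matrix.mul_apply]

lemma kpow_zero_apply (M : ℕ → Matrix S S ℝ) (x : ℕ) (α β : S) :
    kpow M 0 x α β = if x = 0 then (if α = β then 1 else 0) else 0 := by
  show (if x = 0 then (1 : Matrix S S ℝ) else 0) α β = _
  split <;> simp [Matrix.one_apply]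

lemma kpow_nonneg {M : ℕ → Matrix S S ℝ} (hM : ∀ x α β, 0 ≤ M x α β)
    (n x : ℕ) (α β : S) : 0 ≤ kpow M n x α β := by
  induction n generalizing x α β with
  | zero => rw [kpow_zero_apply]; split <;> [skip; exact le_refl 0]; split <;> norm_num
  | succ n ih =>
    show 0 ≤ kconv M (kpow M n) x α β
    rw [kconv_apply]
    exact Finset.sum_nonneg fun y _ => Finset.sum_nonneg fun γ _ =>
      mul_nonneg (hM _ _ _) (ih _ _ _)

end MRT

set_option linter.unusedSectionVars false

namespace MRT2

open MRT Finset

variable {S : Type*} [Fintype S] [DecidableEq S] [Nonempty S]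

noncomputable def ones : ℕ → Matrix S S ℝ := fun _ => Matrix.of fun _ _ => (1:ℝ)

lemma mk_kconv (F G : ℕ → Matrix S S ℝ) :
    PowerSeries.mk (kconv F G) = PowerSeries.mk F * PowerSeries.mk G := by
  apply PowerSeries.ext; intro x
  rw [PowerSeries.coeff_mk, kconv_eq_coeff]

lemma kconv_assoc (F G H : ℕ → Matrix S S ℝ) :
    kconv (kconv F G) H = kconv F (kconv G H) := by
  funext x
  rw [kconv_eq_coeff, kconv_eq_coeff, mk_kconv, mk_kconv, mul_assoc]

lemma kconv_ones_apply (F : ℕ → Matrix S S ℝ) (x : ℕ) (γ β₀ : S) :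
    kconv F ones x γ β₀ = ∑ m ∈ range (x+1), ∑ b, F m γ b := by
  rw [kconv_apply]
  refine Finset.sum_congr rfl fun m _ => Finset.sum_congr rfl fun b _ => ?_
  simp [ones]

/-- one-step mass -/
noncomputable def gm (K : ℕ → Matrix S S ℝ) (γ : S) (y : ℕ) : ℝ := ∑ b, K y γ b
/-- cdf of the sojourn from `γ` -/
noncomputable def cdf (K : ℕ → Matrix S S ℝ) (γ : S) (x : ℕ) : ℝ :=
  ∑ y ∈ range (x+1), gm K γ y
/-- tail of the sojourn from `γ` -/
noncomputable def tl (K : ℕ → Matrix S S ℝ) (γ : S) (x : ℕ) : ℝ := 1 - cdf K γ x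
/-- cdf of the k-step location -/
noncomputable def Fk (K : ℕ → Matrix S S ℝ) (k : ℕ) (γ : S) (x : ℕ) : ℝ :=
  ∑ m ∈ range (x+1), ∑ b, kpow K k m γ b
/-- the Markov Green function (including the `k = 0` term) -/
noncomputable def uK (K : ℕ → Matrix S S ℝ) (x : ℕ) (α β : S) : ℝ :=
  ∑' k : ℕ, kpow K k x α β

section basic

variable {K : ℕ → Matrix S S ℝ} (hK : ∀ x α β, 0 ≤ K x α β)
  (h1 : ∀ α : S, HasSum (fun p : ℕ × S => K p.1 α p.2) 1)

include hK in
lemma gm_nonneg (γ : S) (y : ℕ) : 0 ≤ gm K γ y :=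
  Finset.sum_nonneg fun b _ => hK y γ b

include h1 in
lemma hasSum_gm (γ : S) : HasSum (gm K γ) 1 :=
  (h1 γ).prod_fiberwise fun y => hasSum_fintype _

include hK h1 in
lemma cdf_le_one (γ : S) (x : ℕ) : cdf K γ x ≤ 1 :=
  sum_le_hasSum _ (fun y _ => gm_nonneg hK γ y) (hasSum_gm h1 γ)

include hK in
lemma cdf_nonneg (γ : S) (x : ℕ) : 0 ≤ cdf K γ x :=
  Finset.sum_nonneg fun y _ => gm_nonneg hK γ y

include hK h1 in
lemma tl_nonneg (γ : S) (x : ℕ) : 0 ≤ tl K γ x :=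
  sub_nonneg.2 (cdf_le_one hK h1 γ x)

include hK in
lemma tl_le_one (γ : S) (x : ℕ) : tl K γ x ≤ 1 := by
  have := cdf_nonneg hK γ x
  simp only [tl]; linarith

include hK in
lemma Fk_nonneg (k : ℕ) (γ : S) (x : ℕ) : 0 ≤ Fk K k γ x :=
  Finset.sum_nonneg fun m _ => Finset.sum_nonneg fun b _ => kpow_nonneg hK k m γ b

lemma Fk_zero (γ : S) (x : ℕ) : Fk K 0 γ x = 1 := by
  unfold Fk
  have : ∀ m : ℕ, (∑ b, kpow K 0 m γ b) = if m = 0 then 1 else 0 := by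
    intro m
    rcases eq_or_ne m 0 with h | h
    · subst h; simp [kpow_zero_apply]
    · simp [kpow_zero_apply, h]
  rw [Finset.sum_congr rfl fun m _ => this m]
  simp

lemma Fk_succ (k : ℕ) (γ : S) (x : ℕ) :
    Fk K (k+1) γ x = ∑ y ∈ range (x+1), ∑ c, K y γ c * Fk K k c (x - y) := by
  classical
  obtain ⟨β₀⟩ := (inferInstance : Nonempty S)
  have h2 : Fk K (k+1) γ x = kconv K (kconv (kpow K k) ones) x γ β₀ := by
    rw [← kconv_assoc]
    have : kconv K (kpow K k) = kpow K (k+1) := rfl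
    rw [this, kconv_ones_apply]
    rfl
  rw [h2, kconv_apply]
  refine Finset.sum_congr rfl fun y _ => Finset.sum_congr rfl fun c _ => ?_
  rw [kconv_ones_apply]
  rfl

lemma Fk_sub_succ (k : ℕ) (γ : S) (x : ℕ) :
    Fk K k γ x - Fk K (k+1) γ x
      = ∑ m ∈ range (x+1), ∑ c, kpow K k m γ c * tl K c (x - m) := by
  classical
  obtain ⟨β₀⟩ := (inferInstance : Nonempty S)
  have hA : Fk K k γ x = ∑ m ∈ range (x+1), ∑ c, kpow K k m γ c * 1 := by
    unfold Fk; simp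
  have hB : Fk K (k+1) γ x = ∑ m ∈ range (x+1), ∑ c, kpow K k m γ c * cdf K c (x - m) := by
    have h2 : Fk K (k+1) γ x = kconv (kpow K k) (kconv K ones) x γ β₀ := by
      rw [← kconv_assoc, ← kpow_succ_right, kconv_ones_apply]
      rfl
    rw [h2, kconv_apply]
    refine Finset.sum_congr rfl fun m _ => Finset.sum_congr rfl fun c _ => ?_
    rw [kconv_ones_apply]
    rfl
  rw [hA, hB, ← Finset.sum_sub_distrib]
  refine Finset.sum_congr rfl fun m _ => ?_
  rw [← Finset.sum_sub_distrib]
  refine Finset.sum_congr rfl fun c _ => ?_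
  rw [← mul_sub]
  rfl

end basic

end MRT2

namespace MRT2
open MRT Finset
variable {S : Type*} [Fintype S] [DecidableEq S] [Nonempty S]

section decay

variable (p : ℝ)

/-- binomial decay majorant -/
noncomputable def tD (k j : ℕ) : ℝ := (k.choose j : ℝ) * p ^ (k - j)
noncomputable def D (k x : ℕ) : ℝ := ∑ j ∈ range (x+1), tD p k j

variable {p} (hp0 : 0 ≤ p) (hp1 : p < 1)

include hp0 in
lemma tD_nonneg (k j : ℕ) : 0 ≤ tD p k j :=
  mul_nonneg (by positivity) (pow_nonneg hp0 _)

include hp0 in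
lemma D_nonneg (k x : ℕ) : 0 ≤ D p k x :=
  Finset.sum_nonneg fun j _ => tD_nonneg hp0 k j

include hp0 in
lemma D_mono (k : ℕ) {x y : ℕ} (h : x ≤ y) : D p k x ≤ D p k y :=
  Finset.sum_le_sum_of_subset_of_nonneg
    (Finset.range_subset_range.2 (by omega)) (fun j _ _ => tD_nonneg hp0 k j)

lemma D_zero_x (x : ℕ) : D p 0 x = 1 := by
  unfold D tD
  rw [Finset.sum_eq_single 0]
  · simp
  · intro j _ hj
    rcases Nat.exists_eq_succ_of_ne_zero hj with ⟨i, rfl⟩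
    simp [Nat.choose_eq_zero_of_lt (Nat.succ_pos i)]
  · intro h; exact absurd (Finset.mem_range.2 (Nat.succ_pos x)) h

lemma tD_succ_zero (k : ℕ) : tD p (k+1) 0 = p * tD p k 0 := by
  unfold tD; simp [pow_succ]; ring

lemma tD_succ_succ (k i : ℕ) : tD p (k+1) (i+1) = p * tD p k (i+1) + tD p k i := by
  unfold tD
  rw [Nat.succ_sub_succ, Nat.choose_succ_succ]
  push_cast
  have h : (↑(k.choose (i+1)) : ℝ) * p ^ (k - i) = p * (↑(k.choose (i+1)) * p ^ (k - (i+1))) := by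
    rcases le_or_gt (i+1) k with h' | h'
    · have : k - i = (k - (i+1)) + 1 := by omega
      rw [this, pow_succ]; ring
    · rw [Nat.choose_eq_zero_of_lt h']; simp
  rw [add_mul, h]; ring

lemma D_succ_zero (k : ℕ) : D p (k+1) 0 = p * D p k 0 := by
  unfold D; simp [tD_succ_zero]

lemma D_succ (k x : ℕ) (hx : 1 ≤ x) : D p (k+1) x = p * D p k x + D p k (x-1) := by
  obtain ⟨x', rfl⟩ : ∃ x', x = x' + 1 := ⟨x - 1, by omega⟩
  unfold D
  rw [Finset.sum_range_succ' (tD p (k+1)), Finset.sum_range_succ' (tD p k)]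
  simp only [tD_succ_succ, tD_succ_zero, Nat.add_sub_cancel]
  rw [Finset.sum_add_distrib, mul_add, Finset.mul_sum]
  ring

end decay
end MRT2
namespace MRT2
open MRT Finset
variable {S : Type*} [Fintype S] [DecidableEq S] [Nonempty S]

section decay2

variable {p : ℝ} (hp0 : 0 ≤ p) (hp1 : p < 1)

include hp0 hp1 in
lemma summable_aux_pow (j : ℕ) : Summable (fun k : ℕ => ((k : ℝ)+1)^j * p^k) := by
  have hs : ∀ i : ℕ, Summable (fun k : ℕ => (j.choose i : ℝ) * ((k:ℝ)^i * p^k)) := by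
    intro i
    exact (summable_pow_mul_geometric_of_norm_lt_one (R := ℝ) i
      (by rwa [Real.norm_eq_abs, abs_of_nonneg hp0])).mul_left _
  have : Summable (fun k : ℕ => ∑ i ∈ range (j+1), (j.choose i : ℝ) * ((k:ℝ)^i * p^k)) :=
    summable_sum fun i _ => hs i
  refine this.congr fun k => ?_
  rw [add_pow]
  rw [Finset.sum_mul]
  refine Finset.sum_congr rfl fun i _ => ?_
  simp; ring

include hp0 hp1 in
lemma summable_tD (j : ℕ) : Summable (fun k : ℕ => tD p k j) := by
  rw [← summable_nat_add_iff j]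
  have hle : ∀ k : ℕ, tD p (k + j) j ≤ ((j:ℝ)+1)^j * (((k:ℝ)+1)^j * p^k) := by
    intro k
    unfold tD
    rw [Nat.add_sub_cancel]
    have h1 : ((k+j).choose j : ℝ) ≤ ((k:ℝ)+(j:ℝ))^j := by
      calc ((k+j).choose j : ℝ) ≤ (((k+j)^j : ℕ) : ℝ) := by
            exact_mod_cast Nat.choose_le_pow (k+j) j
        _ = ((k:ℝ)+(j:ℝ))^j := by push_cast; ring
    have h2 : ((k:ℝ)+(j:ℝ))^j ≤ (((j:ℝ)+1)*((k:ℝ)+1))^j := by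
      apply pow_le_pow_left₀ (by positivity)
      nlinarith [Nat.cast_nonneg (α := ℝ) k, Nat.cast_nonneg (α := ℝ) j]
    calc ((k+j).choose j : ℝ) * p^k ≤ (((j:ℝ)+1)*((k:ℝ)+1))^j * p^k := by
          apply mul_le_mul_of_nonneg_right _ (pow_nonneg hp0 _)
          exact le_trans h1 h2
      _ = ((j:ℝ)+1)^j * (((k:ℝ)+1)^j * p^k) := by rw [mul_pow]; ring
  exact Summable.of_nonneg_of_le (fun k => tD_nonneg hp0 _ _) hle
    (((summable_aux_pow hp0 hp1 j).mul_left _))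

include hp0 hp1 in
lemma summable_D (x : ℕ) : Summable (fun k : ℕ => D p k x) :=
  summable_sum fun j _ => summable_tD hp0 hp1 j

end decay2
end MRT2
namespace MRT2
open MRT Finset
variable {S : Type*} [Fintype S] [DecidableEq S] [Nonempty S]

section bound

variable {K : ℕ → Matrix S S ℝ} {p : ℝ}
  (hK : ∀ x α β, 0 ≤ K x α β)
  (h1 : ∀ α : S, HasSum (fun p : ℕ × S => K p.1 α p.2) 1)
  (hp0 : 0 ≤ p) (hp1 : p < 1) (hpg : ∀ γ : S, gm K γ 0 ≤ p)

include hK h1 hp0 hp1 hpg in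
lemma Fk_le_D : ∀ (k : ℕ) (γ : S) (x : ℕ), Fk K k γ x ≤ D p k x := by
  intro k
  induction k with
  | zero => intro γ x; rw [Fk_zero, D_zero_x]
  | succ k ih =>
    intro γ x
    rcases Nat.eq_zero_or_pos x with rfl | hx
    · -- x = 0
      rw [Fk_succ, D_succ_zero]
      have : ∑ y ∈ range 1, ∑ c, K y γ c * Fk K k c (0 - y)
          = ∑ c, K 0 γ c * Fk K k c 0 := by simp
      rw [this]
      calc ∑ c, K 0 γ c * Fk K k c 0 ≤ ∑ c, K 0 γ c * D p k 0 :=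
            Finset.sum_le_sum fun c _ =>
              mul_le_mul_of_nonneg_left (ih c 0) (hK 0 γ c)
        _ = gm K γ 0 * D p k 0 := by rw [← Finset.sum_mul]; rfl
        _ ≤ p * D p k 0 := mul_le_mul_of_nonneg_right (hpg γ) (D_nonneg hp0 _ _)
    · -- x ≥ 1
      rw [Fk_succ, D_succ _ _ hx, Finset.sum_range_succ']
      have hfirst : ∑ y ∈ range x, ∑ c, K (y+1) γ c * Fk K k c (x - (y+1))
          ≤ D p k (x-1) := by
        have hA : (∑ y ∈ range x, gm K γ (y+1)) + gm K γ 0 ≤ 1 := by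
          have := cdf_le_one hK h1 γ x
          rwa [cdf, Finset.sum_range_succ'] at this
        have hbd : ∑ y ∈ range x, ∑ c, K (y+1) γ c * Fk K k c (x - (y+1))
            ≤ (∑ y ∈ range x, gm K γ (y+1)) * D p k (x-1) := by
          rw [Finset.sum_mul]
          refine Finset.sum_le_sum fun y hy => ?_
          calc ∑ c, K (y+1) γ c * Fk K k c (x - (y+1))
              ≤ ∑ c, K (y+1) γ c * D p k (x-1) := by
                refine Finset.sum_le_sum fun c _ => mul_le_mul_of_nonneg_left ?_ (hK _ γ c)
                exact le_trans (ih c _) (D_mono hp0 k (by omega))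
            _ = gm K γ (y+1) * D p k (x-1) := by rw [← Finset.sum_mul]; rfl
        refine le_trans hbd ?_
        have h01 : (∑ y ∈ range x, gm K γ (y+1)) ≤ 1 := by
          have := gm_nonneg hK (K := K) γ 0; linarith
        nlinarith [D_nonneg hp0 (p := p) k (x-1),
          Finset.sum_nonneg (fun y (_ : y ∈ range x) => gm_nonneg hK (K := K) γ (y+1))]
      have hzero : ∑ c, K 0 γ c * Fk K k c (x - 0) ≤ p * D p k x := by
        calc ∑ c, K 0 γ c * Fk K k c x ≤ ∑ c, K 0 γ c * D p k x :=
              Finset.sum_le_sum fun c _ =>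
                mul_le_mul_of_nonneg_left (ih c x) (hK 0 γ c)
          _ = gm K γ 0 * D p k x := by rw [← Finset.sum_mul]; rfl
          _ ≤ p * D p k x := mul_le_mul_of_nonneg_right (hpg γ) (D_nonneg hp0 _ _)
      have := add_le_add hfirst hzero
      simp only [Nat.sub_zero] at *
      linarith

include hK h1 hp0 hp1 hpg in
lemma kpow_le_Fk (k : ℕ) (x : ℕ) (γ b : S) : kpow K k x γ b ≤ Fk K k γ x := by
  unfold Fk
  calc kpow K k x γ b ≤ ∑ b', kpow K k x γ b' :=
        Finset.single_le_sum (fun b' _ => kpow_nonneg hK k x γ b') (Finset.mem_univ b)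
    _ ≤ ∑ m ∈ range (x+1), ∑ b', kpow K k m γ b' :=
        Finset.single_le_sum
          (fun m _ => Finset.sum_nonneg fun b' _ => kpow_nonneg hK k m γ b')
          (Finset.self_mem_range_succ x)

include hK h1 hp0 hp1 hpg in
lemma summable_kpow (x : ℕ) (γ b : S) : Summable (fun k => kpow K k x γ b) :=
  Summable.of_nonneg_of_le (fun k => kpow_nonneg hK k x γ b)
    (fun k => le_trans (kpow_le_Fk hK h1 hp0 hp1 hpg k x γ b) (Fk_le_D hK h1 hp0 hp1 hpg k γ x))
    (summable_D hp0 hp1 x)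

include hK h1 hp0 hp1 hpg in
lemma Fk_tendsto_zero (γ : S) (x : ℕ) :
    Filter.Tendsto (fun k => Fk K k γ x) Filter.atTop (nhds 0) := by
  refine squeeze_zero (fun k => Fk_nonneg hK k γ x)
    (fun k => Fk_le_D hK h1 hp0 hp1 hpg k γ x) ?_
  exact (summable_D hp0 hp1 x).tendsto_atTop_zero

include hK in
lemma uK_nonneg (x : ℕ) (α b : S) : 0 ≤ uK K x α b :=
  tsum_nonneg fun k => kpow_nonneg hK k x α b

include hK h1 hp0 hp1 hpg in
lemma tail_eq_one (γ : S) (x : ℕ) :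
    ∑ m ∈ range (x+1), ∑ c, uK K m γ c * tl K c (x - m) = 1 := by
  have hterm : ∀ k : ℕ, Fk K k γ x - Fk K (k+1) γ x
      = ∑ m ∈ range (x+1), ∑ c, kpow K k m γ c * tl K c (x - m) :=
    fun k => Fk_sub_succ k γ x
  have htel : Filter.Tendsto (fun n => ∑ k ∈ range n, (Fk K k γ x - Fk K (k+1) γ x))
      Filter.atTop (nhds 1) := by
    have : ∀ n, ∑ k ∈ range n, (Fk K k γ x - Fk K (k+1) γ x) = Fk K 0 γ x - Fk K n γ x :=
      fun n => Finset.sum_range_sub' (fun k => Fk K k γ x) n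
    simp only [this, Fk_zero]
    have := (Fk_tendsto_zero hK h1 hp0 hp1 hpg γ x).const_sub 1
    simpa using this
  have hnn : ∀ k : ℕ, 0 ≤ ∑ m ∈ range (x+1), ∑ c, kpow K k m γ c * tl K c (x - m) :=
    fun k => Finset.sum_nonneg fun m _ => Finset.sum_nonneg fun c _ =>
      mul_nonneg (kpow_nonneg hK k m γ c) (tl_nonneg hK h1 c _)
  have hhs : HasSum (fun k => ∑ m ∈ range (x+1), ∑ c, kpow K k m γ c * tl K c (x - m)) 1 := by
    rw [hasSum_iff_tendsto_nat_of_nonneg hnn]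
    refine htel.congr fun n => Finset.sum_congr rfl fun k _ => hterm k
  have hsummand : ∀ m ∈ range (x+1), ∀ c : S,
      Summable (fun k => kpow K k m γ c * tl K c (x - m)) := fun m _ c =>
    (summable_kpow hK h1 hp0 hp1 hpg m γ c).mul_right _
  calc ∑ m ∈ range (x+1), ∑ c, uK K m γ c * tl K c (x - m)
      = ∑ m ∈ range (x+1), ∑ c, (∑' k, kpow K k m γ c) * tl K c (x - m) := rfl
    _ = ∑ m ∈ range (x+1), ∑ c, ∑' k, kpow K k m γ c * tl K c (x - m) := by
        refine Finset.sum_congr rfl fun m _ => Finset.sum_congr rfl fun c _ => ?_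
        exact (tsum_mul_right).symm
    _ = ∑' k, ∑ m ∈ range (x+1), ∑ c, kpow K k m γ c * tl K c (x - m) := by
        rw [Summable.tsum_finsetSum]
        · refine Finset.sum_congr rfl fun m hm => ?_
          rw [Summable.tsum_finsetSum]
          intro c _
          exact hsummand m hm c
        · intro m hm
          exact summable_sum fun c _ => hsummand m hm c
    _ = 1 := hhs.tsum_eq
end bound
end MRT2
namespace MRT2
open MRT Finset
variable {S : Type*} [Fintype S] [DecidableEq S] [Nonempty S]

section bound2

variable {K : ℕ → Matrix S S ℝ} {p : ℝ}
  (hK : ∀ x α β, 0 ≤ K x α β)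
  (h1 : ∀ α : S, HasSum (fun p : ℕ × S => K p.1 α p.2) 1)
  (hp0 : 0 ≤ p) (hp1 : p < 1) (hpg : ∀ γ : S, gm K γ 0 ≤ p)

include hK h1 hp0 hp1 hpg in
lemma uK_le_bound (x : ℕ) (γ c : S) : uK K x γ c ≤ (1 - p)⁻¹ := by
  have hle : uK K x γ c * tl K c 0 ≤ 1 := by
    have h := tail_eq_one hK h1 hp0 hp1 hpg γ x
    have hmem : x ∈ range (x+1) := Finset.self_mem_range_succ x
    have h2 : uK K x γ c * tl K c (x - x) ≤ ∑ c', uK K x γ c' * tl K c' (x - x) :=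
      Finset.single_le_sum (f := fun c' => uK K x γ c' * tl K c' (x - x))
        (fun c' _ => mul_nonneg (uK_nonneg hK _ _ _)
        (tl_nonneg hK h1 c' _)) (Finset.mem_univ c)
    have h3 : ∑ c', uK K x γ c' * tl K c' (x - x)
        ≤ ∑ m ∈ range (x+1), ∑ c', uK K m γ c' * tl K c' (x - m) :=
      Finset.single_le_sum (f := fun m => ∑ c', uK K m γ c' * tl K c' (x - m))
        (fun m _ => Finset.sum_nonneg fun c' _ => mul_nonneg (uK_nonneg hK _ _ _)
          (tl_nonneg hK h1 c' _)) hmem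
    rw [Nat.sub_self] at h2 h3
    calc uK K x γ c * tl K c 0 ≤ _ := h2
      _ ≤ _ := h3
      _ = 1 := h
  have htl : 1 - p ≤ tl K c 0 := by
    have : cdf K c 0 = gm K c 0 := by unfold cdf; simp
    have h2 := hpg c
    unfold tl; rw [this]; linarith
  have hup : 0 ≤ uK K x γ c := uK_nonneg hK _ _ _
  have h1p : 0 < 1 - p := by linarith
  have hmul : uK K x γ c * (1 - p) ≤ 1 := by
    have := mul_le_mul_of_nonneg_left htl hup
    calc uK K x γ c * (1 - p) ≤ uK K x γ c * tl K c 0 := this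
      _ ≤ 1 := hle
  rw [inv_eq_one_div, le_div_iff₀ h1p]
  exact hmul

include hK h1 hp0 hp1 hpg in
lemma uK_renewal (x : ℕ) (hx : 1 ≤ x) (α b : S) :
    uK K x α b = ∑ y ∈ range (x+1), ∑ c, K y α c * uK K (x-y) c b := by
  have hsum := summable_kpow hK h1 hp0 hp1 hpg x α b
  have h0 : uK K x α b = kpow K 0 x α b + ∑' k, kpow K (k+1) x α b :=
    Summable.tsum_eq_zero_add hsum
  have hz : kpow K 0 x α b = 0 := by
    have hx0 : x ≠ 0 := by omega
    rw [kpow_zero_apply]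
    simp [hx0]
  have hc : ∀ k : ℕ, kpow K (k+1) x α b
      = ∑ y ∈ range (x+1), ∑ c, K y α c * kpow K k (x-y) c b := by
    intro k
    have : kpow K (k+1) = kconv K (kpow K k) := rfl
    rw [this, kconv_apply]
  rw [h0, hz, zero_add]
  calc (∑' k, kpow K (k+1) x α b)
      = ∑' k, ∑ y ∈ range (x+1), ∑ c, K y α c * kpow K k (x-y) c b := by
        exact tsum_congr hc
    _ = ∑ y ∈ range (x+1), ∑ c, K y α c * ∑' k, kpow K k (x-y) c b := by
        rw [Summable.tsum_finsetSum]
        · refine Finset.sum_congr rfl fun y hy => ?_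
          rw [Summable.tsum_finsetSum]
          · exact Finset.sum_congr rfl fun c _ => tsum_mul_left
          · intro c _
            exact (summable_kpow hK h1 hp0 hp1 hpg (x-y) c b).mul_left _
        · intro y _
          exact summable_sum fun c _ =>
            (summable_kpow hK h1 hp0 hp1 hpg (x-y) c b).mul_left _
    _ = ∑ y ∈ range (x+1), ∑ c, K y α c * uK K (x-y) c b := rfl

end bound2
end MRT2
namespace MRT2
open MRT Finset Filter

section helpers

/-- assemble a `HasSum` on `ℕ × B` (B finite) from the fibers over `B` -/
lemma hasSum_prod_fintype {B : Type*} [Fintype B] [DecidableEq B]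
    (f : ℕ × B → ℝ) (c : B → ℝ) (h : ∀ b, HasSum (fun n => f (n, b)) (c b)) :
    HasSum f (∑ b, c b) := by
  have hfb : ∀ b : B, HasSum (fun q : ℕ × B => if q.2 = b then f (q.1, b) else 0) (c b) := by
    intro b
    have hinj : Function.Injective (fun n : ℕ => (n, b)) := fun m n h => by
      simpa using congrArg Prod.fst h
    rw [← Function.Injective.hasSum_iff hinj]
    · exact (h b).congr_fun fun n => by simp
    · intro q hq
      rcases q with ⟨n, b'⟩
      have : b' ≠ b := by
        intro hb; subst hb; exact hq ⟨n, rfl⟩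
      simp [this]
  have := hasSum_sum (s := (Finset.univ : Finset B))
    (f := fun b (q : ℕ × B) => if q.2 = b then f (q.1, b) else 0) (a := c)
    (fun b _ => hfb b)
  refine this.congr_fun fun q => ?_
  rcases q with ⟨n, b⟩
  rw [Finset.sum_eq_single b]
  · simp
  · intro b' _ hb'
    simp [Ne.symm hb']
  · intro hb; exact absurd (Finset.mem_univ b) hb

/-- tail of a summable nonneg sequence, as a `tsum` -/
lemma hasSum_tail {w : ℕ → ℝ} {c : ℝ} (hw : HasSum w c) (s : ℕ) :
    HasSum (fun z => if s < z then w z else 0) (c - ∑ z ∈ range (s+1), w z) := by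
  have hfin : HasSum (fun z => if s < z then 0 else w z) (∑ z ∈ range (s+1), w z) := by
    have h0 : HasSum (fun z => if s < z then 0 else w z)
        (∑ z ∈ range (s+1), if s < z then 0 else w z) := by
      refine hasSum_sum_of_ne_finset_zero fun z hz => ?_
      have : s < z := by
        by_contra h
        exact hz (Finset.mem_range.2 (by omega))
      simp [this]
    have h1 : (∑ z ∈ range (s+1), if s < z then 0 else w z) = ∑ z ∈ range (s+1), w z := by
      refine Finset.sum_congr rfl fun z hz => ?_
      have : ¬ s < z := by
        have := Finset.mem_range.1 hz; omega
      simp [this]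
    rwa [h1] at h0
  have := hw.sub hfin
  refine this.congr_fun fun z => ?_
  by_cases h : s < z <;> simp [h]

/-- summability of tails, given a finite first moment -/
lemma summable_tails {w : ℕ → ℝ} (hw0 : ∀ z, 0 ≤ w z) (hw : Summable w)
    (hw1 : Summable (fun z : ℕ => (z:ℝ) * w z)) :
    Summable (fun s : ℕ => ∑' z : ℕ, if s < z then w z else 0) := by
  have hts : ∀ s : ℕ, Summable (fun z => if s < z then w z else 0) :=
    fun s => ((hasSum_tail hw.hasSum s)).summable
  have hpt : ∀ n z : ℕ, (∑ s ∈ range n, if s < z then w z else 0)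
      = ((min n z : ℕ) : ℝ) * w z := by
    intro n z
    rw [Finset.sum_ite, Finset.sum_const, Finset.sum_const]
    have hfil : (range n).filter (fun s => s < z) = range (min n z) := by
      ext s; simp [Finset.mem_range, Nat.lt_min]
    rw [hfil, Finset.card_range]
    simp [nsmul_eq_mul]
  have key : ∀ n : ℕ, ∑ s ∈ range n, (∑' z : ℕ, if s < z then w z else 0)
      ≤ ∑' z : ℕ, (z:ℝ) * w z := by
    intro n
    rw [← Summable.tsum_finsetSum fun s _ => hts s]
    have hminsum : Summable (fun z : ℕ => ((min n z : ℕ) : ℝ) * w z) := by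
      refine Summable.of_nonneg_of_le
        (fun z => mul_nonneg (Nat.cast_nonneg _) (hw0 z)) (fun z => ?_) hw1
      exact mul_le_mul_of_nonneg_right
        (by exact_mod_cast Nat.cast_le.2 (min_le_right n z)) (hw0 z)
    calc ∑' z : ℕ, ∑ s ∈ range n, (if s < z then w z else 0)
        = ∑' z : ℕ, ((min n z : ℕ) : ℝ) * w z := tsum_congr fun z => hpt n z
      _ ≤ ∑' z : ℕ, (z:ℝ) * w z := by
          refine Summable.tsum_le_tsum (fun z => ?_) hminsum hw1
          exact mul_le_mul_of_nonneg_right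
            (by exact_mod_cast Nat.cast_le.2 (min_le_right n z)) (hw0 z)
  exact summable_of_sum_range_le
    (fun s => tsum_nonneg fun z => by by_cases h : s < z <;> simp [h, hw0 z]) key

end helpers
end MRT2
namespace MRT3
open MRT MRT2 Finset Filter Matrix

variable {T : ℕ} [NeZero T]

lemma natCast_val_eq (a : ZMod T) : ((a.val : ℕ) : ZMod T) = a :=
  ZMod.natCast_rightInverse a

variable {Γ : ℕ → Matrix (ZMod T) (ZMod T) ℝ} {ν : ZMod T → ℝ} {μ : ℝ}

section setup

variable
    (hΓ : ∀ x α β, 0 ≤ Γ x α β)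
    (hsupp : ∀ (x : ℕ) (α β : ZMod T), (x : ZMod T) ≠ β - α → Γ x α β = 0)
    (hsemi : ∀ α : ZMod T, HasSum (fun p : ℕ × ZMod T => Γ p.1 α p.2) 1)
    (hposmat : ∀ α β : ZMod T, 0 < ∑' x : ℕ, Γ x α β)
    (hν : ∀ α, 0 < ν α) (hνsum : ∑ α, ν α = 1)
    (hinv : ∀ β, ∑ α, ν α * ∑' x : ℕ, Γ x α β = ν β)
    (hμ : HasSum (fun p : ℕ × ZMod T × ZMod T =>
      (p.1 : ℝ) * ν p.2.1 * Γ p.1 p.2.1 p.2.2) μ)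
    (hμpos : 0 < μ)
    (haper : ∀ α β : ZMod T, ∀ᶠ x : ℕ in atTop, (x : ZMod T) = β - α → 0 < Γ x α β)

include hsemi in
lemma summable_Γ (a b : ZMod T) : Summable (fun x : ℕ => Γ x a b) := by
  have := (hsemi a).summable.comp_injective
    (i := fun x : ℕ => ((x, b) : ℕ × ZMod T)) (fun x y h => by simpa using congrArg Prod.fst h)
  exact this

include hΓ hsupp in
lemma gm_zero_eq (γ : ZMod T) : gm Γ γ 0 = Γ 0 γ γ := by
  unfold gm
  rw [Finset.sum_eq_single γ]
  · intro b _ hb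
    refine hsupp 0 γ b ?_
    intro h0
    rw [Nat.cast_zero] at h0
    exact hb (sub_eq_zero.mp h0.symm)
  · intro h; exact absurd (Finset.mem_univ γ) h

include hΓ hsupp hsemi hposmat hμ hμpos in
lemma diag_lt_one (γ : ZMod T) : Γ 0 γ γ < 1 := by
  rcases lt_or_ge (Γ 0 γ γ) 1 with h | h
  · exact h
  have hle : Γ 0 γ γ ≤ 1 := by
    have := sum_le_hasSum {((0 : ℕ), γ)} (fun q _ => hΓ q.1 γ q.2) (hsemi γ)
    simpa using this
  have heq : Γ 0 γ γ = 1 := le_antisymm hle h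
  -- all other entries of row γ vanish
  have hzero : ∀ (x : ℕ) (b : ZMod T), (x, b) ≠ ((0:ℕ), γ) → Γ x γ b = 0 := by
    intro x b hxb
    by_contra hne
    have hpos : 0 < Γ x γ b := lt_of_le_of_ne (hΓ x γ b) (Ne.symm hne)
    have hsum2 : Γ 0 γ γ + Γ x γ b ≤ 1 := by
      have hmem : ((0:ℕ), γ) ∉ ({(x, b)} : Finset (ℕ × ZMod T)) := by
        simp [Ne.symm hxb]
      have := sum_le_hasSum (insert ((0:ℕ),γ) {(x,b)}) (fun q _ => hΓ q.1 γ q.2) (hsemi γ)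
      rwa [Finset.sum_insert hmem, Finset.sum_singleton] at this
    rw [heq] at hsum2
    linarith
  by_cases hsub : ∀ b : ZMod T, b = γ
  · -- single state: μ = 0
    exfalso
    have : HasSum (fun p : ℕ × ZMod T × ZMod T =>
        (p.1 : ℝ) * ν p.2.1 * Γ p.1 p.2.1 p.2.2) 0 := by
      have h0 : ∀ p : ℕ × ZMod T × ZMod T,
          (p.1 : ℝ) * ν p.2.1 * Γ p.1 p.2.1 p.2.2 = 0 := by
        rintro ⟨x', a', b'⟩
        rcases Nat.eq_zero_or_pos x' with rfl | hx
        · simp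
        · have hz : Γ x' a' b' = 0 := by
            rw [hsub a', hsub b']
            exact hzero x' γ (by
              simp only [ne_eq, Prod.mk.injEq, not_and]
              intro h'; omega)
          simp [hz]
      exact (hasSum_zero).congr_fun fun p => Eq.symm (h0 p) ▸ rfl
    have := hμ.unique this
    rw [this] at hμpos
    exact lt_irrefl 0 hμpos
  · push_neg at hsub
    obtain ⟨b, hb⟩ := hsub
    have h0 : (fun x : ℕ => Γ x γ b) = fun _ => 0 := by
      funext x
      exact hzero x b (by simp [hb])
    have := hposmat γ b
    rw [h0] at this
    simp at this

/-- maximum diagonal mass at 0 -/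
noncomputable def pmax (Γ : ℕ → Matrix (ZMod T) (ZMod T) ℝ) : ℝ :=
  Finset.univ.sup' Finset.univ_nonempty fun γ => Γ 0 γ γ

lemma le_pmax (γ : ZMod T) : Γ 0 γ γ ≤ pmax Γ := by
  unfold pmax
  exact Finset.le_sup' (fun γ => Γ 0 γ γ) (Finset.mem_univ γ)

include hΓ in
lemma pmax_nonneg : 0 ≤ pmax Γ := by
  obtain ⟨γ⟩ := (inferInstance : Nonempty (ZMod T))
  exact le_trans (hΓ 0 γ γ) (le_pmax γ)

include hΓ hsupp hsemi hposmat hμ hμpos in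
lemma pmax_lt_one : pmax Γ < 1 := by
  unfold pmax
  rw [Finset.sup'_lt_iff]
  intro γ _
  exact diag_lt_one hΓ hsupp hsemi hposmat hμ hμpos γ

/-- the time-reversed kernel -/
noncomputable def hatK (Γ : ℕ → Matrix (ZMod T) (ZMod T) ℝ) (ν : ZMod T → ℝ) :
    ℕ → Matrix (ZMod T) (ZMod T) ℝ :=
  fun y => Matrix.of fun a b => ν b * Γ y b a / ν a

include hΓ hν in
lemma hatK_nonneg : ∀ (x : ℕ) (a b : ZMod T), 0 ≤ hatK Γ ν x a b := by
  intro x a b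
  have := hΓ x b a
  have h1 := (hν b).le
  have h2 := (hν a).le
  unfold hatK
  simp only [Matrix.of_apply]
  positivity

include hsemi hν hinv in
lemma hatK_hasSum_one (a : ZMod T) :
    HasSum (fun q : ℕ × ZMod T => hatK Γ ν q.1 a q.2) 1 := by
  have hfib : ∀ b : ZMod T,
      HasSum (fun y : ℕ => hatK Γ ν y a b) (ν b * (∑' x, Γ x b a) / ν a) := by
    intro b
    have h0 : HasSum (fun y : ℕ => Γ y b a) (∑' x, Γ x b a) := (summable_Γ hsemi b a).hasSum
    have := (h0.mul_left (ν b)).div_const (ν a)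
    exact this.congr_fun fun y => by unfold hatK; simp [Matrix.of_apply]
  have htot := hasSum_prod_fintype (fun q : ℕ × ZMod T => hatK Γ ν q.1 a q.2)
    (fun b => ν b * (∑' x, Γ x b a) / ν a) hfib
  have : (∑ b, ν b * (∑' x, Γ x b a) / ν a) = 1 := by
    rw [← Finset.sum_div, hinv a, div_self (hν a).ne']
  rwa [this] at htot

include hΓ hsupp hν in
lemma gm_hat_zero_eq (γ : ZMod T) : gm (hatK Γ ν) γ 0 = Γ 0 γ γ := by
  unfold gm
  rw [Finset.sum_eq_single γ]
  · unfold hatK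
    simp only [Matrix.of_apply]
    rw [mul_comm, mul_div_assoc, div_self (hν γ).ne', mul_one]
  · intro b _ hb
    have : Γ 0 b γ = 0 := hsupp 0 b γ (by
      intro h0
      rw [Nat.cast_zero] at h0
      exact hb ((sub_eq_zero.mp h0.symm).symm))
    unfold hatK
    simp [Matrix.of_apply, this]
  · intro h; exact absurd (Finset.mem_univ γ) h

include hν in
lemma kpow_hat (k x : ℕ) (a b : ZMod T) :
    kpow (hatK Γ ν) k x a b = ν b * kpow Γ k x b a / ν a := by
  induction k generalizing x a b with
  | zero =>
    rw [kpow_zero_apply, kpow_zero_apply]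
    rcases eq_or_ne x 0 with rfl | hx
    · simp only [if_true]
      rcases eq_or_ne a b with rfl | hab
      · simp [div_self (hν a).ne']
      · simp [hab, Ne.symm hab]
    · simp [hx]
  | succ k ih =>
    have hL : kpow (hatK Γ ν) (k+1) = kconv (hatK Γ ν) (kpow (hatK Γ ν) k) := rfl
    have hR : kpow Γ (k+1) = kconv (kpow Γ k) Γ := kpow_succ_right Γ k
    rw [hL, hR, kconv_apply, kconv_apply]
    calc ∑ y ∈ range (x+1), ∑ c, hatK Γ ν y a c * kpow (hatK Γ ν) k (x-y) c b
        = ∑ y ∈ range (x+1),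
            ∑ c, ν b * (kpow Γ k (x+1-1-y) b c * Γ (x - (x+1-1-y)) c a) / ν a := by
          refine Finset.sum_congr rfl fun y hy => Finset.sum_congr rfl fun c _ => ?_
          have hyx : y ≤ x := by
            have := Finset.mem_range.1 hy; omega
          have h1 : x + 1 - 1 - y = x - y := by omega
          have h2 : x - (x - y) = y := by omega
          rw [h1, h2, ih]
          unfold hatK
          simp only [Matrix.of_apply]
          have hca := (hν c).ne'
          have haa := (hν a).ne'
          field_simp
      _ = ∑ y ∈ range (x+1), ∑ c, ν b * (kpow Γ k y b c * Γ (x - y) c a) / ν a :=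
          Finset.sum_range_reflect
            (fun y => ∑ c, ν b * (kpow Γ k y b c * Γ (x - y) c a) / ν a) (x+1)
      _ = (ν b * ∑ y ∈ range (x+1), ∑ c, kpow Γ k y b c * Γ (x-y) c a) / ν a := by
          rw [Finset.mul_sum, Finset.sum_div]
          refine Finset.sum_congr rfl fun y _ => ?_
          rw [Finset.mul_sum, Finset.sum_div]

end setup
end MRT3
namespace MRT3
open MRT MRT2 Finset Filter Matrix

variable {T : ℕ} [NeZero T]
variable {Γ : ℕ → Matrix (ZMod T) (ZMod T) ℝ} {ν : ZMod T → ℝ} {μ : ℝ}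

section setup2

variable
    (hΓ : ∀ x α β, 0 ≤ Γ x α β)
    (hsupp : ∀ (x : ℕ) (α β : ZMod T), (x : ZMod T) ≠ β - α → Γ x α β = 0)
    (hsemi : ∀ α : ZMod T, HasSum (fun p : ℕ × ZMod T => Γ p.1 α p.2) 1)
    (hposmat : ∀ α β : ZMod T, 0 < ∑' x : ℕ, Γ x α β)
    (hν : ∀ α, 0 < ν α) (hνsum : ∑ α, ν α = 1)
    (hinv : ∀ β, ∑ α, ν α * ∑' x : ℕ, Γ x α β = ν β)
    (hμ : HasSum (fun p : ℕ × ZMod T × ZMod T =>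
      (p.1 : ℝ) * ν p.2.1 * Γ p.1 p.2.1 p.2.2) μ)
    (hμpos : 0 < μ)
    (haper : ∀ α β : ZMod T, ∀ᶠ x : ℕ in atTop, (x : ZMod T) = β - α → 0 < Γ x α β)

-- abbreviations for the package of hypotheses needed by the generic layer
include hΓ hsupp hsemi hposmat hμ hμpos in
lemma pgm_Γ (γ : ZMod T) : gm Γ γ 0 ≤ pmax Γ := by
  rw [gm_zero_eq hΓ hsupp γ]; exact le_pmax γ

include hΓ hsupp hsemi hposmat hν hμ hμpos in
lemma pgm_hat (γ : ZMod T) : gm (hatK Γ ν) γ 0 ≤ pmax Γ := by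
  rw [gm_hat_zero_eq hΓ hsupp hν γ]; exact le_pmax γ

include hΓ hsupp hsemi hposmat hν hinv hμ hμpos in
lemma summable_kpow_Γ (x : ℕ) (a b : ZMod T) : Summable (fun k => kpow Γ k x a b) :=
  summable_kpow hΓ hsemi (pmax_nonneg hΓ) (pmax_lt_one hΓ hsupp hsemi hposmat hμ hμpos)
    (pgm_Γ hΓ hsupp hsemi hposmat hμ hμpos) x a b

include hΓ hsupp hsemi hposmat hν hinv hμ hμpos in
lemma summable_kpow_hat (x : ℕ) (a b : ZMod T) :
    Summable (fun k => kpow (hatK Γ ν) k x a b) :=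
  summable_kpow (hatK_nonneg hΓ hν) (hatK_hasSum_one hsemi hν hinv) (pmax_nonneg hΓ)
    (pmax_lt_one hΓ hsupp hsemi hposmat hμ hμpos)
    (pgm_hat hΓ hsupp hsemi hposmat hν hμ hμpos) x a b

include hΓ hsupp hsemi hposmat hν hinv hμ hμpos in
lemma uK_hat (x : ℕ) (a b : ZMod T) :
    uK (hatK Γ ν) x a b = ν b * uK Γ x b a / ν a := by
  unfold uK
  rw [tsum_congr (fun k => kpow_hat hν k x a b)]
  calc ∑' k, ν b * kpow Γ k x b a / ν a
      = ∑' k, (ν b / ν a) * kpow Γ k x b a := by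
        refine tsum_congr fun k => ?_; ring
    _ = (ν b / ν a) * ∑' k, kpow Γ k x b a := tsum_mul_left
    _ = ν b * uK Γ x b a / ν a := by unfold uK; ring

include hΓ hsupp hsemi hposmat hν hinv hμ hμpos in
lemma uK_Γ_le : ∀ (x : ℕ) (a b : ZMod T), uK Γ x a b ≤ (1 - pmax Γ)⁻¹ :=
  fun x a b => uK_le_bound hΓ hsemi (pmax_nonneg hΓ)
    (pmax_lt_one hΓ hsupp hsemi hposmat hμ hμpos)
    (pgm_Γ hΓ hsupp hsemi hposmat hμ hμpos) x a b

include hΓ hsupp hsemi hposmat hν hinv hμ hμpos in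
lemma tail_hat_eq_one (x : ℕ) (b : ZMod T) :
    ∑ m ∈ range (x+1), ∑ c, uK (hatK Γ ν) m b c * tl (hatK Γ ν) c (x - m) = 1 :=
  tail_eq_one (hatK_nonneg hΓ hν) (hatK_hasSum_one hsemi hν hinv) (pmax_nonneg hΓ)
    (pmax_lt_one hΓ hsupp hsemi hposmat hμ hμpos)
    (pgm_hat hΓ hsupp hsemi hposmat hν hμ hμpos) b x

include hΓ hsupp hsemi hposmat hν hinv hμ hμpos in
lemma uK_renewal_Γ (x : ℕ) (hx : 1 ≤ x) (a b : ZMod T) :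
    uK Γ x a b = ∑ y ∈ range (x+1), ∑ c, Γ y a c * uK Γ (x-y) c b :=
  uK_renewal hΓ hsemi (pmax_nonneg hΓ) (pmax_lt_one hΓ hsupp hsemi hposmat hμ hμpos)
    (pgm_Γ hΓ hsupp hsemi hposmat hμ hμpos) x hx a b

include hΓ hsupp in
lemma kpow_supp : ∀ (k x : ℕ) (a b : ZMod T), kpow Γ k x a b ≠ 0 → (x : ZMod T) = b - a := by
  intro k
  induction k with
  | zero =>
    intro x a b h
    rw [kpow_zero_apply] at h
    rcases eq_or_ne x 0 with rfl | hx
    · rcases eq_or_ne a b with rfl | hab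
      · simp
      · simp [hab] at h
    · simp [hx] at h
  | succ k ih =>
    intro x a b h
    have hconv : kpow Γ (k+1) = kconv Γ (kpow Γ k) := rfl
    rw [hconv, kconv_apply] at h
    obtain ⟨y, hy, h2⟩ := Finset.exists_ne_zero_of_sum_ne_zero h
    obtain ⟨c, _, h3⟩ := Finset.exists_ne_zero_of_sum_ne_zero h2
    have hΓne : Γ y a c ≠ 0 := fun h0 => h3 (by rw [h0, zero_mul])
    have hkne : kpow Γ k (x-y) c b ≠ 0 := fun h0 => h3 (by rw [h0, mul_zero])
    have e1 : (y : ZMod T) = c - a := by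
      by_contra hne
      exact hΓne (hsupp y a c hne)
    have e2 : ((x - y : ℕ) : ZMod T) = b - c := ih (x-y) c b hkne
    have hyx : y ≤ x := by
      have := Finset.mem_range.1 hy; omega
    have : (x : ZMod T) = (y : ZMod T) + ((x - y : ℕ) : ZMod T) := by
      rw [← Nat.cast_add]
      congr 1
      omega
    rw [this, e1, e2]
    ring

include hΓ hsupp hsemi hposmat hν hinv hμ hμpos in
lemma uK_supp (x : ℕ) (hx : 1 ≤ x) (a b : ZMod T) (h : (x : ZMod T) ≠ b - a) :
    uK Γ x a b = 0 := by
  unfold uK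
  have : ∀ k : ℕ, kpow Γ k x a b = 0 := by
    intro k
    by_contra hne
    exact h (kpow_supp hΓ hsupp k x a b hne)
  rw [tsum_congr this]
  exact tsum_zero

include hΓ hsemi hν hinv in
lemma gm_hat_eq (γ : ZMod T) (y : ℕ) :
    gm (hatK Γ ν) γ y = (∑ b, ν b * Γ y b γ) / ν γ := by
  unfold gm hatK
  rw [Finset.sum_div]
  refine Finset.sum_congr rfl fun b _ => ?_
  simp [Matrix.of_apply]

include hΓ hsupp hsemi hposmat hν hinv hμ hμpos haper in
lemma tl_hat_pos (γ : ZMod T) (s : ℕ) : 0 < tl (hatK Γ ν) γ s := by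
  -- find z > s in the support of the sojourn from γ
  obtain ⟨X, hX⟩ := (eventually_atTop).1 (haper γ γ)
  set z := T * (X + s + 1) with hz
  have hzres : (z : ZMod T) = γ - γ := by
    simp [hz]
  have hTpos : 0 < T := Nat.pos_of_ne_zero (NeZero.ne T)
  have hzX : z ≥ X := by
    calc z = T * (X + s + 1) := rfl
      _ ≥ 1 * (X + s + 1) := Nat.mul_le_mul_right _ hTpos
      _ ≥ X := by omega
  have hzs : s < z := by
    calc s < 1 * (X + s + 1) := by omega
      _ ≤ T * (X + s + 1) := Nat.mul_le_mul_right _ hTpos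
  have hΓz : 0 < Γ z γ γ := hX z hzX hzres
  have hgm : Γ z γ γ ≤ gm (hatK Γ ν) γ z := by
    rw [gm_hat_eq hΓ hsemi hν hinv γ z]
    have h1 : ν γ * Γ z γ γ ≤ ∑ b, ν b * Γ z b γ :=
      Finset.single_le_sum (f := fun b => ν b * Γ z b γ)
        (fun b _ => mul_nonneg (hν b).le (hΓ z b γ)) (Finset.mem_univ γ)
    rw [le_div_iff₀ (hν γ)]
    calc Γ z γ γ * ν γ = ν γ * Γ z γ γ := by ring
      _ ≤ _ := h1
  have hcdf : cdf (hatK Γ ν) γ s + gm (hatK Γ ν) γ z ≤ 1 := by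
    have hmem : z ∉ range (s+1) := by
      simp only [Finset.mem_range]; omega
    have := sum_le_hasSum (insert z (range (s+1)))
      (fun y _ => gm_nonneg (hatK_nonneg hΓ hν) γ y)
      (hasSum_gm (hatK_hasSum_one hsemi hν hinv) γ)
    rwa [Finset.sum_insert hmem, add_comm] at this
  unfold tl
  have : 0 < gm (hatK Γ ν) γ z := lt_of_lt_of_le hΓz hgm
  linarith

include hμ in
lemma summable_zΓ (b c : ZMod T) : Summable (fun z : ℕ => (z : ℝ) * ν b * Γ z b c) := by
  have := hμ.summable.comp_injective
    (i := fun z : ℕ => ((z, b, c) : ℕ × ZMod T × ZMod T))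
    (fun x y h => by simpa using congrArg Prod.fst h)
  exact this

include hΓ hsupp hsemi hposmat hν hinv hμ hμpos in
lemma summable_first_moment_hat (γ : ZMod T) :
    Summable (fun z : ℕ => (z : ℝ) * gm (hatK Γ ν) γ z) := by
  have h1 : ∀ z : ℕ, (z : ℝ) * gm (hatK Γ ν) γ z
      = ∑ b, ((z : ℝ) * ν b * Γ z b γ) / ν γ := by
    intro z
    rw [gm_hat_eq hΓ hsemi hν hinv γ z, mul_div_assoc', Finset.mul_sum, Finset.sum_div]
    refine Finset.sum_congr rfl fun b _ => ?_
    ring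
  have h2 : Summable (fun z : ℕ => ∑ b, ((z : ℝ) * ν b * Γ z b γ) / ν γ) :=
    summable_sum fun b _ => (summable_zΓ hμ b γ).div_const _
  exact h2.congr fun z => (h1 z).symm

end setup2
end MRT3
namespace MRT3
open MRT MRT2 Finset Filter Matrix

variable {T : ℕ} [NeZero T]

/-- number of lattice points of the class `c` below `n` -/
noncomputable def cnt (c : ZMod T) (n : ℕ) : ℝ :=
  ∑ s ∈ range n, if (s : ZMod T) = c then 1 else 0

lemma cnt_nonneg (c : ZMod T) (n : ℕ) : 0 ≤ cnt c n :=
  Finset.sum_nonneg fun s _ => by split <;> norm_num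

lemma cnt_le (c : ZMod T) (n : ℕ) : cnt c n ≤ n := by
  unfold cnt
  calc ∑ s ∈ range n, (if (s : ZMod T) = c then (1:ℝ) else 0)
      ≤ ∑ _s ∈ range n, (1:ℝ) := Finset.sum_le_sum fun s _ => by split <;> norm_num
    _ = n := by simp

lemma cnt_formula (c : ZMod T) (q r z : ℕ) (hr : r < T) (hz : z + r = c.val + T*q) :
    cnt c z = q := by
  have hTpos : 0 < T := Nat.pos_of_ne_zero (NeZero.ne T)
  have hfil : (range z).filter (fun s : ℕ => ((s : ZMod T) = c))
      = (range q).image (fun j => c.val + T*j) := by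
    ext s
    simp only [Finset.mem_filter, Finset.mem_range, Finset.mem_image]
    constructor
    · rintro ⟨hsz, hsc⟩
      obtain ⟨j, hj⟩ := (ZMod.natCast_eq_iff T s c).1 hsc
      refine ⟨j, ?_, hj.symm⟩
      -- c.val + T*j < z  →  j < q
      by_contra hjq
      push_neg at hjq
      have h1 : T*q ≤ T*j := Nat.mul_le_mul_left T hjq
      have : z ≤ c.val + T*j := by omega
      omega
    · rintro ⟨j, hjq, rfl⟩
      constructor
      · -- c.val + T*j < z
        have h1 : T*(j+1) ≤ T*q := Nat.mul_le_mul_left T hjq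
        have h2 : T*(j+1) = T*j + T := by ring
        omega
      · push_cast
        simp [natCast_val_eq]
  unfold cnt
  rw [Finset.sum_boole, hfil, Finset.card_image_of_injective _ (fun i j h => by
    have h2 : T*i = T*j := by omega
    exact Nat.eq_of_mul_eq_mul_left hTpos h2), Finset.card_range]

lemma cnt_support (γ0 b c : ZMod T) (z : ℕ) (h : (z : ZMod T) = c - b) :
    cnt (c - γ0) z = (z:ℝ)/T + ((b-γ0).val : ℝ)/T - ((c-γ0).val : ℝ)/T := by
  set A := c - γ0 with hA
  set B := b - γ0 with hB
  have hzc : ((z + B.val : ℕ) : ZMod T) = A := by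
    push_cast
    rw [natCast_val_eq, h, hA, hB]
    ring
  obtain ⟨q, hq⟩ := (ZMod.natCast_eq_iff T _ A).1 hzc
  have hcnt : cnt A z = q := cnt_formula A q B.val z (ZMod.val_lt B) hq
  have hTne : (T:ℝ) ≠ 0 := Nat.cast_ne_zero.2 (NeZero.ne T)
  have hqr : (z:ℝ) + (B.val:ℝ) = (A.val:ℝ) + (T:ℝ)*q := by exact_mod_cast hq
  rw [hcnt]
  have hrw : (z:ℝ)/T + ((B.val:ℝ))/T - ((A.val:ℝ))/T = ((z:ℝ) + (B.val:ℝ) - (A.val:ℝ))/T := by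
    ring
  rw [hrw, eq_div_iff hTne]
  linarith

variable {Γ : ℕ → Matrix (ZMod T) (ZMod T) ℝ} {ν : ZMod T → ℝ} {μ : ℝ}

section weight

variable
    (hΓ : ∀ x α β, 0 ≤ Γ x α β)
    (hsupp : ∀ (x : ℕ) (α β : ZMod T), (x : ZMod T) ≠ β - α → Γ x α β = 0)
    (hsemi : ∀ α : ZMod T, HasSum (fun p : ℕ × ZMod T => Γ p.1 α p.2) 1)
    (hposmat : ∀ α β : ZMod T, 0 < ∑' x : ℕ, Γ x α β)
    (hν : ∀ α, 0 < ν α) (hνsum : ∑ α, ν α = 1)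
    (hinv : ∀ β, ∑ α, ν α * ∑' x : ℕ, Γ x α β = ν β)
    (hμ : HasSum (fun p : ℕ × ZMod T × ZMod T =>
      (p.1 : ℝ) * ν p.2.1 * Γ p.1 p.2.1 p.2.2) μ)
    (hμpos : 0 < μ)

include hsemi in
lemma P_row_one (b : ZMod T) : ∑ c, (∑' x : ℕ, Γ x b c) = 1 := by
  have h1 : HasSum ((fun p : ℕ × ZMod T => Γ p.1 b p.2) ∘ (Equiv.prodComm (ZMod T) ℕ)) 1 :=
    ((Equiv.prodComm (ZMod T) ℕ).hasSum_iff).2 (hsemi b)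
  have h2 : HasSum (fun c : ZMod T => ∑' x : ℕ, Γ x b c) 1 :=
    h1.prod_fiberwise fun c => (summable_Γ hsemi b c).hasSum
  exact (hasSum_fintype _).unique h2

include hsemi hν hinv hμ in
lemma hasSum_weight (γ0 : ZMod T)
    (hsupp' : ∀ (x : ℕ) (α β : ZMod T), (x : ZMod T) ≠ β - α → Γ x α β = 0) :
    HasSum (fun q : ℕ × ZMod T × ZMod T =>
      ν q.2.1 * Γ q.1 q.2.1 q.2.2 * cnt (q.2.2 - γ0) q.1) (μ / T) := by
  set hh : ZMod T → ℝ := fun b => ((b - γ0).val : ℝ)/T with hhh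
  have W1 : HasSum (fun q : ℕ × ZMod T × ZMod T =>
      ν q.2.1 * Γ q.1 q.2.1 q.2.2 * ((q.1:ℝ)/T)) (μ/T) := by
    have := hμ.div_const (T:ℝ)
    exact this.congr_fun fun q => by ring
  have W2 : HasSum (fun q : ℕ × ZMod T × ZMod T =>
      ν q.2.1 * Γ q.1 q.2.1 q.2.2 * hh q.2.1) (∑ b, ν b * hh b) := by
    have hfib : ∀ bc : ZMod T × ZMod T,
        HasSum (fun z : ℕ => ν bc.1 * Γ z bc.1 bc.2 * hh bc.1)
          ((ν bc.1 * hh bc.1) * ∑' x, Γ x bc.1 bc.2) := by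
      intro bc
      exact ((summable_Γ hsemi bc.1 bc.2).hasSum.mul_left _).congr_fun fun z => by ring
    have := hasSum_prod_fintype
      (fun q : ℕ × ZMod T × ZMod T => ν q.2.1 * Γ q.1 q.2.1 q.2.2 * hh q.2.1)
      (fun bc => (ν bc.1 * hh bc.1) * ∑' x, Γ x bc.1 bc.2) hfib
    have hval : (∑ bc : ZMod T × ZMod T, (ν bc.1 * hh bc.1) * ∑' x, Γ x bc.1 bc.2)
        = ∑ b, ν b * hh b := by
      rw [Fintype.sum_prod_type]
      dsimp only
      refine Finset.sum_congr rfl fun b _ => ?_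
      rw [← Finset.mul_sum, P_row_one hsemi b, mul_one]
    rwa [hval] at this
  have W3 : HasSum (fun q : ℕ × ZMod T × ZMod T =>
      ν q.2.1 * Γ q.1 q.2.1 q.2.2 * hh q.2.2) (∑ b, ν b * hh b) := by
    have hfib : ∀ bc : ZMod T × ZMod T,
        HasSum (fun z : ℕ => ν bc.1 * Γ z bc.1 bc.2 * hh bc.2)
          ((ν bc.1 * hh bc.2) * ∑' x, Γ x bc.1 bc.2) := by
      intro bc
      exact ((summable_Γ hsemi bc.1 bc.2).hasSum.mul_left _).congr_fun fun z => by ring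
    have := hasSum_prod_fintype
      (fun q : ℕ × ZMod T × ZMod T => ν q.2.1 * Γ q.1 q.2.1 q.2.2 * hh q.2.2)
      (fun bc => (ν bc.1 * hh bc.2) * ∑' x, Γ x bc.1 bc.2) hfib
    have hval : (∑ bc : ZMod T × ZMod T, (ν bc.1 * hh bc.2) * ∑' x, Γ x bc.1 bc.2)
        = ∑ b, ν b * hh b := by
      rw [Fintype.sum_prod_type]
      dsimp only
      rw [Finset.sum_comm]
      calc ∑ c, ∑ b, (ν b * hh c) * ∑' x, Γ x b c
          = ∑ c, hh c * ∑ b, ν b * ∑' x, Γ x b c := by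
            refine Finset.sum_congr rfl fun c _ => ?_
            rw [Finset.mul_sum]
            exact Finset.sum_congr rfl fun b _ => by ring
        _ = ∑ c, hh c * ν c := by
            refine Finset.sum_congr rfl fun c _ => ?_
            rw [hinv c]
        _ = ∑ b, ν b * hh b := Finset.sum_congr rfl fun b _ => by ring
    rwa [hval] at this
  have hcomb := (W1.add (W2.sub W3))
  have : μ/T + ((∑ b, ν b * hh b) - (∑ b, ν b * hh b)) = μ/T := by ring
  rw [this] at hcomb
  refine hcomb.congr_fun fun q => ?_
  rcases q with ⟨z, b, c⟩
  simp only
  rcases eq_or_ne (Γ z b c) 0 with hz | hz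
  · rw [hz]; ring
  · have hres : (z : ZMod T) = c - b := by
      by_contra hne
      exact hz (hsupp' z b c hne)
    rw [cnt_support γ0 b c z hres]
    simp only [hhh]
    ring

end weight
end MRT3
namespace MRT3
open MRT MRT2 Finset Filter Matrix

variable {T : ℕ} [NeZero T]
variable {Γ : ℕ → Matrix (ZMod T) (ZMod T) ℝ} {ν : ZMod T → ℝ} {μ : ℝ}

section fubini

variable
    (hΓ : ∀ x α β, 0 ≤ Γ x α β)
    (hsupp : ∀ (x : ℕ) (α β : ZMod T), (x : ZMod T) ≠ β - α → Γ x α β = 0)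
    (hsemi : ∀ α : ZMod T, HasSum (fun p : ℕ × ZMod T => Γ p.1 α p.2) 1)
    (hposmat : ∀ α β : ZMod T, 0 < ∑' x : ℕ, Γ x α β)
    (hν : ∀ α, 0 < ν α) (hνsum : ∑ α, ν α = 1)
    (hinv : ∀ β, ∑ α, ν α * ∑' x : ℕ, Γ x α β = ν β)
    (hμ : HasSum (fun p : ℕ × ZMod T × ZMod T =>
      (p.1 : ℝ) * ν p.2.1 * Γ p.1 p.2.1 p.2.2) μ)
    (hμpos : 0 < μ)

include hΓ hsupp hsemi hposmat hν hνsum hinv hμ hμpos in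
lemma summable_tl_hat (γ : ZMod T) : Summable (fun s : ℕ => tl (hatK Γ ν) γ s) := by
  have hgm := hasSum_gm (hatK_hasSum_one hsemi hν hinv) γ
  have hW0 : ∀ z, 0 ≤ gm (hatK Γ ν) γ z := fun z => gm_nonneg (hatK_nonneg hΓ hν) γ z
  have hmom := summable_first_moment_hat hΓ hsupp hsemi hposmat hν hinv hμ hμpos γ
  have hs := summable_tails hW0 hgm.summable hmom
  refine hs.congr fun s => ?_
  exact ((hasSum_tail hgm s).tsum_eq).symm ▸ rfl

include hΓ hsupp hsemi hposmat hν hνsum hinv hμ hμpos in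
lemma tl_hat_eq_tsum (γ : ZMod T) (s : ℕ) :
    tl (hatK Γ ν) γ s = ∑' z : ℕ, (if s < z then gm (hatK Γ ν) γ z else 0) := by
  have hgm := hasSum_gm (hatK_hasSum_one hsemi hν hinv) γ
  exact ((hasSum_tail hgm s).tsum_eq).symm

include hΓ hsupp hsemi hposmat hν hνsum hinv hμ hμpos in
lemma hasSum_nu_tl (γ0 : ZMod T) :
    HasSum (fun sγ : ℕ × ZMod T =>
      (if ((sγ.1 : ZMod T)) = sγ.2 - γ0 then (1:ℝ) else 0)
        * (ν sγ.2 * tl (hatK Γ ν) sγ.2 sγ.1)) (μ / T) := by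
  classical
  set F : (ℕ × ZMod T) × (ℕ × ZMod T) → ℝ := fun r =>
    (if ((r.1.1 : ZMod T)) = r.1.2 - γ0 then (1:ℝ) else 0)
      * (if r.1.1 < r.2.1 then ν r.2.2 * Γ r.2.1 r.2.2 r.1.2 else 0) with hF
  have hFnn : ∀ r, 0 ≤ F r := by
    intro r
    refine mul_nonneg (by split <;> norm_num) (by
      split
      · exact mul_nonneg (hν _).le (hΓ _ _ _)
      · exact le_refl 0)
  -- slice sums in the (z,b) variable
  have claimA : ∀ sγ : ℕ × ZMod T,
      HasSum (fun zb : ℕ × ZMod T => F (sγ, zb))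
        ((if ((sγ.1 : ZMod T)) = sγ.2 - γ0 then (1:ℝ) else 0)
          * (ν sγ.2 * tl (hatK Γ ν) sγ.2 sγ.1)) := by
    rintro ⟨s, γ⟩
    have hfib : ∀ b : ZMod T,
        HasSum (fun z : ℕ => F ((s,γ),(z,b)))
          ((if ((s : ZMod T)) = γ - γ0 then (1:ℝ) else 0) *
            (ν b * ((∑' x, Γ x b γ) - ∑ z ∈ range (s+1), Γ z b γ))) := by
      intro b
      have h0 : HasSum (fun z : ℕ => if s < z then Γ z b γ else 0)
          ((∑' x, Γ x b γ) - ∑ z ∈ range (s+1), Γ z b γ) :=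
        hasSum_tail (summable_Γ hsemi b γ).hasSum s
      have := h0.mul_left ((if ((s : ZMod T)) = γ - γ0 then (1:ℝ) else 0) * ν b)
      rw [mul_assoc] at this
      refine this.congr_fun fun z => ?_
      simp only [hF]
      rcases lt_or_ge s z with h | h
      · simp only [h, if_true]
        ring
      · simp only [Nat.not_lt.2 h, if_false, mul_zero]
    have htot := hasSum_prod_fintype (fun zb : ℕ × ZMod T => F ((s,γ), zb)) _ hfib
    have hval : (∑ b, (if ((s : ZMod T)) = γ - γ0 then (1:ℝ) else 0) *
        (ν b * ((∑' x, Γ x b γ) - ∑ z ∈ range (s+1), Γ z b γ)))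
        = (if ((s : ZMod T)) = γ - γ0 then (1:ℝ) else 0) * (ν γ * tl (hatK Γ ν) γ s) := by
      rw [← Finset.mul_sum]
      congr 1
      have h1 : ∑ b, ν b * ((∑' x, Γ x b γ) - ∑ z ∈ range (s+1), Γ z b γ)
          = (∑ b, ν b * ∑' x, Γ x b γ) - ∑ b, ν b * ∑ z ∈ range (s+1), Γ z b γ := by
        rw [← Finset.sum_sub_distrib]
        exact Finset.sum_congr rfl fun b _ => by ring
      rw [h1, hinv γ]
      have h2 : ∑ b, ν b * ∑ z ∈ range (s+1), Γ z b γ = ν γ * cdf (hatK Γ ν) γ s := by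
        unfold cdf
        rw [Finset.mul_sum]
        calc ∑ b, ν b * ∑ z ∈ range (s+1), Γ z b γ
            = ∑ b, ∑ z ∈ range (s+1), ν b * Γ z b γ := by
              exact Finset.sum_congr rfl fun b _ => Finset.mul_sum _ _ _
          _ = ∑ z ∈ range (s+1), ∑ b, ν b * Γ z b γ := Finset.sum_comm
          _ = ∑ z ∈ range (s+1), ν γ * gm (hatK Γ ν) γ z := by
              refine Finset.sum_congr rfl fun z _ => ?_
              rw [gm_hat_eq hΓ hsemi hν hinv γ z]
              rw [mul_comm (ν γ), div_mul_cancel₀ _ (hν γ).ne']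
      rw [h2]
      unfold tl
      ring
    rwa [hval] at htot
  -- slice sums in the (s,γ) variable
  have claimB : ∀ zb : ℕ × ZMod T,
      HasSum (fun sγ : ℕ × ZMod T => F (sγ, zb))
        (∑ γ, ν zb.2 * Γ zb.1 zb.2 γ * cnt (γ - γ0) zb.1) := by
    rintro ⟨z, b⟩
    have hsupport : ∀ sγ : ℕ × ZMod T, sγ ∉ (range z) ×ˢ (univ : Finset (ZMod T)) →
        F (sγ, (z, b)) = 0 := by
      rintro ⟨s, γ⟩ hmem
      have : ¬ s < z := by
        intro hlt
        exact hmem (Finset.mem_product.2 ⟨Finset.mem_range.2 hlt, Finset.mem_univ γ⟩)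
      simp only [hF, this, if_false, mul_zero]
    have h0 := hasSum_sum_of_ne_finset_zero (L := SummationFilter.unconditional _) hsupport
    have hval : ∑ sγ ∈ (range z) ×ˢ (univ : Finset (ZMod T)), F (sγ, (z, b))
        = ∑ γ, ν b * Γ z b γ * cnt (γ - γ0) z := by
      rw [Finset.sum_product]
      rw [Finset.sum_comm]
      refine Finset.sum_congr rfl fun γ _ => ?_
      unfold cnt
      rw [Finset.mul_sum]
      refine Finset.sum_congr rfl fun s hs => ?_
      have hsz : s < z := Finset.mem_range.1 hs
      simp only [hF, hsz, if_true]
      ring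
    rwa [hval] at h0
  -- summability of F
  have eswap : ((ℕ × ZMod T) × (ℕ × ZMod T)) ≃ ((ℕ × ZMod T) × (ℕ × ZMod T)) :=
    Equiv.prodComm _ _
  have hFswap_summable : Summable (fun r : (ℕ × ZMod T) × (ℕ × ZMod T) => F (r.2, r.1)) := by
    rw [summable_prod_of_nonneg (fun r => hFnn _)]
    constructor
    · intro zb
      exact (claimB zb).summable
    · -- the marginal over (z,b)
      have hbig : Summable (fun r : (ℕ × ZMod T) × ZMod T =>
          ((r.1.1 : ℝ) * ν r.1.2 * Γ r.1.1 r.1.2 r.2)) := by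
        have := (Equiv.prodAssoc ℕ (ZMod T) (ZMod T)).summable_iff.2 hμ.summable
        exact this.congr fun r => rfl
      have hmarg : Summable (fun zb : ℕ × ZMod T =>
          ∑ γ, (zb.1 : ℝ) * ν zb.2 * Γ zb.1 zb.2 γ) := by
        have hnn : 0 ≤ (fun r : (ℕ × ZMod T) × ZMod T =>
            ((r.1.1 : ℝ) * ν r.1.2 * Γ r.1.1 r.1.2 r.2)) := by
          intro r
          exact mul_nonneg (mul_nonneg (Nat.cast_nonneg _) (hν _).le) (hΓ _ _ _)
        have := ((summable_prod_of_nonneg hnn).1 hbig).2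
        refine this.congr fun zb => ?_
        rw [tsum_fintype]
      refine Summable.of_nonneg_of_le (fun zb => ?_) (fun zb => ?_) hmarg
      · rw [(claimB zb).tsum_eq]
        exact Finset.sum_nonneg fun γ _ => mul_nonneg
          (mul_nonneg (hν _).le (hΓ _ _ _)) (cnt_nonneg _ _)
      · rw [(claimB zb).tsum_eq]
        refine Finset.sum_le_sum fun γ _ => ?_
        calc ν zb.2 * Γ zb.1 zb.2 γ * cnt (γ - γ0) zb.1
            ≤ ν zb.2 * Γ zb.1 zb.2 γ * zb.1 :=
              mul_le_mul_of_nonneg_left (cnt_le _ _)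
                (mul_nonneg (hν _).le (hΓ _ _ _))
          _ = (zb.1 : ℝ) * ν zb.2 * Γ zb.1 zb.2 γ := by ring
  have hFsummable : Summable F := by
    have h2 : Summable (F ∘ ⇑(Equiv.prodComm (ℕ × ZMod T) (ℕ × ZMod T))) :=
      hFswap_summable.congr fun r => rfl
    exact (Equiv.prodComm (ℕ × ZMod T) (ℕ × ZMod T)).summable_iff.1 h2
  -- total value via the (z,b) grouping
  have htsum_swap : ∑' r : (ℕ × ZMod T) × (ℕ × ZMod T), F (r.2, r.1) = μ / T := by
    rw [Summable.tsum_prod' hFswap_summable (fun zb => (claimB zb).summable)]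
    have hstep : ∀ zb : ℕ × ZMod T, ∑' sγ : ℕ × ZMod T, F (sγ, zb)
        = ∑ γ, ν zb.2 * Γ zb.1 zb.2 γ * cnt (γ - γ0) zb.1 :=
      fun zb => (claimB zb).tsum_eq
    rw [tsum_congr fun zb => hstep zb]
    -- now use hasSum_weight
    have hw := hasSum_weight hsemi hν hinv hμ γ0 hsupp
    have hw2 : HasSum ((fun q : ℕ × ZMod T × ZMod T =>
        ν q.2.1 * Γ q.1 q.2.1 q.2.2 * cnt (q.2.2 - γ0) q.1) ∘
        (Equiv.prodAssoc ℕ (ZMod T) (ZMod T))) (μ/T) :=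
      (Equiv.prodAssoc ℕ (ZMod T) (ZMod T)).hasSum_iff.2 hw
    have hw3 : HasSum (fun zb : ℕ × ZMod T =>
        ∑ γ, ν zb.2 * Γ zb.1 zb.2 γ * cnt (γ - γ0) zb.1) (μ/T) := by
      refine hw2.prod_fiberwise fun zb => ?_
      exact hasSum_fintype _
    exact hw3.tsum_eq
  have htsum : ∑' r, F r = μ / T := by
    rw [← htsum_swap]
    have := (Equiv.prodComm (ℕ × ZMod T) (ℕ × ZMod T)).tsum_eq F
    rw [← this]
    rfl
  have hFhs : HasSum F (μ/T) := htsum ▸ hFsummable.hasSum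
  exact hFhs.prod_fiberwise claimA

end fubini
end MRT3
namespace MRT3
open MRT MRT2 Finset Filter Matrix

section analytic

lemma cobounded_of_abs_le {a : ℕ → ℝ} {B : ℝ} (h : ∀ n, |a n| ≤ B) :
    Filter.IsCoboundedUnder (· ≤ ·) Filter.atTop a := by
  have hb : Filter.IsBoundedUnder (· ≥ ·) Filter.atTop a :=
    Filter.isBoundedUnder_of ⟨-B, fun n => by
      have := h n; rw [abs_le] at this; exact this.1⟩
  exact hb.isCoboundedUnder_flip

lemma bounded_of_abs_le {a : ℕ → ℝ} {B : ℝ} (h : ∀ n, |a n| ≤ B) :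
    Filter.IsBoundedUnder (· ≤ ·) Filter.atTop a :=
  Filter.isBoundedUnder_of ⟨B, fun n => by
    have := h n; rw [abs_le] at this; exact this.2⟩

lemma exists_subseq_tendsto_limsup {a : ℕ → ℝ} {B : ℝ} (hb : ∀ n, |a n| ≤ B) :
    ∃ φ : ℕ → ℕ, (∀ j, j ≤ φ j) ∧
      Tendsto (a ∘ φ) atTop (nhds (limsup a atTop)) := by
  set L := limsup a atTop with hL
  have hfreq : ∀ j : ℕ, ∃ᶠ k in atTop, |a k - L| < 1/(j+1) ∧ j ≤ k := by
    intro j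
    have hε : (0:ℝ) < 1/(j+1) := by positivity
    have h1 : ∃ᶠ k in atTop, L - 1/(j+1) < a k :=
      frequently_lt_of_lt_limsup (cobounded_of_abs_le hb) (by linarith)
    have h2 : ∀ᶠ k in atTop, a k < L + 1/(j+1) :=
      eventually_lt_of_limsup_lt (by linarith) (bounded_of_abs_le hb)
    have h3 : ∀ᶠ k in atTop, j ≤ k := eventually_ge_atTop j
    refine (h1.and_eventually (h2.and h3)).mono ?_
    rintro k ⟨hk1, hk2, hk3⟩
    exact ⟨abs_sub_lt_iff.2 ⟨by linarith, by linarith⟩, hk3⟩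
  obtain ⟨φ, _, hφ⟩ := Filter.extraction_forall_of_frequently hfreq
  refine ⟨φ, fun j => (hφ j).2, ?_⟩
  have h0 : Tendsto (fun j => a (φ j) - L) atTop (nhds 0) := by
    refine squeeze_zero_norm (fun j => ?_) tendsto_one_div_add_atTop_nhds_zero_nat
    exact le_of_lt (hφ j).1
  have := h0.add_const L
  simpa [Function.comp_def] using this

variable {T : ℕ} [NeZero T]
variable {Γ : ℕ → Matrix (ZMod T) (ZMod T) ℝ} {ν : ZMod T → ℝ} {μ : ℝ}

variable
    (hΓ : ∀ x α β, 0 ≤ Γ x α β)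
    (hsupp : ∀ (x : ℕ) (α β : ZMod T), (x : ZMod T) ≠ β - α → Γ x α β = 0)
    (hsemi : ∀ α : ZMod T, HasSum (fun p : ℕ × ZMod T => Γ p.1 α p.2) 1)
    (hposmat : ∀ α β : ZMod T, 0 < ∑' x : ℕ, Γ x α β)
    (hν : ∀ α, 0 < ν α) (hνsum : ∑ α, ν α = 1)
    (hinv : ∀ β, ∑ α, ν α * ∑' x : ℕ, Γ x α β = ν β)
    (hμ : HasSum (fun p : ℕ × ZMod T × ZMod T =>
      (p.1 : ℝ) * ν p.2.1 * Γ p.1 p.2.1 p.2.2) μ)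
    (hμpos : 0 < μ)
    (haper : ∀ α β : ZMod T, ∀ᶠ x : ℕ in atTop, (x : ZMod T) = β - α → 0 < Γ x α β)

include hΓ hsupp hsemi hposmat hν hinv hμ hμpos in
lemma diag_limits (β : ZMod T) (N : ℕ → ℕ) :
    ∃ (ψ : ℕ → ℕ) (vv : ZMod T → ℕ → ℝ), StrictMono ψ ∧
      (∀ γ m, Tendsto (fun j => uK Γ (N (ψ j) - m) γ β) atTop (nhds (vv γ m))) ∧
      (∀ γ m, 0 ≤ vv γ m ∧ vv γ m ≤ (1 - pmax Γ)⁻¹) := by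
  classical
  set C := (1 - pmax Γ)⁻¹ with hC
  set s : Set ((ZMod T × ℕ) → ℝ) := Set.univ.pi (fun _ => Set.Icc 0 C) with hs
  have hcomp : IsCompact s := isCompact_univ_pi fun _ => isCompact_Icc
  set W : ℕ → (ZMod T × ℕ) → ℝ := fun j q => uK Γ (N j - q.2) q.1 β with hW
  have hWmem : ∀ j, W j ∈ s := by
    intro j
    rw [hs, Set.mem_univ_pi]
    intro q
    exact ⟨uK_nonneg hΓ _ _ _, uK_Γ_le hΓ hsupp hsemi hposmat hν hinv hμ hμpos _ _ _⟩
  obtain ⟨v, hvs, ψ, hψmono, hψtend⟩ := hcomp.tendsto_subseq hWmem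
  refine ⟨ψ, fun γ m => v (γ, m), hψmono, ?_, ?_⟩
  · intro γ m
    exact (tendsto_pi_nhds.1 hψtend) (γ, m)
  · intro γ m
    rw [hs, Set.mem_univ_pi] at hvs
    exact ⟨(hvs (γ, m)).1, (hvs (γ, m)).2⟩

include hΓ hsupp hsemi hposmat hν hinv hμ hμpos in
lemma vv_support (β γ0 : ZMod T) (N : ℕ → ℕ) (vv : ZMod T → ℕ → ℝ)
    (hNtop : Tendsto N atTop atTop)
    (hres : ∀ j, ((N j : ℕ) : ZMod T) = β - γ0)
    (hlim : ∀ γ m, Tendsto (fun j => uK Γ (N j - m) γ β) atTop (nhds (vv γ m)))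
    (γ : ZMod T) (m : ℕ) (hm : ((m : ℕ) : ZMod T) ≠ γ - γ0) : vv γ m = 0 := by
  have hev : ∀ᶠ j in atTop, uK Γ (N j - m) γ β = 0 := by
    filter_upwards [hNtop.eventually (eventually_ge_atTop (m+1))] with j hj
    have hcast : ((N j - m : ℕ) : ZMod T) = (β - γ0) - (m : ZMod T) := by
      rw [Nat.cast_sub (by omega), hres j]
    refine uK_supp hΓ hsupp hsemi hposmat hν hinv hμ hμpos _ (by omega) _ _ ?_
    rw [hcast]
    intro hcontra
    apply hm
    linear_combination -hcontra
  have h1 : Tendsto (fun j => uK Γ (N j - m) γ β) atTop (nhds 0) :=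
    tendsto_const_nhds.congr' (hev.mono fun j hj => hj.symm)
  exact tendsto_nhds_unique (hlim γ m) h1

end analytic
end MRT3
namespace MRT3
open MRT MRT2 Finset Filter Matrix

variable {T : ℕ} [NeZero T]
variable {Γ : ℕ → Matrix (ZMod T) (ZMod T) ℝ} {ν : ZMod T → ℝ} {μ : ℝ}

section limits

variable
    (hΓ : ∀ x α β, 0 ≤ Γ x α β)
    (hsupp : ∀ (x : ℕ) (α β : ZMod T), (x : ZMod T) ≠ β - α → Γ x α β = 0)
    (hsemi : ∀ α : ZMod T, HasSum (fun p : ℕ × ZMod T => Γ p.1 α p.2) 1)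
    (hposmat : ∀ α β : ZMod T, 0 < ∑' x : ℕ, Γ x α β)
    (hν : ∀ α, 0 < ν α) (hνsum : ∑ α, ν α = 1)
    (hinv : ∀ β, ∑ α, ν α * ∑' x : ℕ, Γ x α β = ν β)
    (hμ : HasSum (fun p : ℕ × ZMod T × ZMod T =>
      (p.1 : ℝ) * ν p.2.1 * Γ p.1 p.2.1 p.2.2) μ)
    (hμpos : 0 < μ)

include hΓ hsupp hsemi hposmat hν hinv hμ hμpos in
lemma vv_harmonic (β : ZMod T) (N : ℕ → ℕ) (vv : ZMod T → ℕ → ℝ)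
    (hNtop : Tendsto N atTop atTop)
    (hlim : ∀ γ m, Tendsto (fun j => uK Γ (N j - m) γ β) atTop (nhds (vv γ m)))
    (γ : ZMod T) (m : ℕ) :
    vv γ m = ∑' q : ℕ × ZMod T, Γ q.1 γ q.2 * vv q.2 (m + q.1) := by
  classical
  set B := (1 - pmax Γ)⁻¹ with hB
  have hBnn : 0 ≤ B := by
    have := pmax_lt_one hΓ hsupp hsemi hposmat hμ hμpos
    rw [hB]
    have h1 : (0:ℝ) < 1 - pmax Γ := by linarith
    exact inv_nonneg.2 h1.le
  have hstep : ∀ j : ℕ, m + 1 ≤ N j →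
      uK Γ (N j - m) γ β = ∑' q : ℕ × ZMod T,
        (if q.1 ≤ N j - m then Γ q.1 γ q.2 * uK Γ (N j - (m + q.1)) q.2 β else 0) := by
    intro j hj
    have hx : 1 ≤ N j - m := by omega
    rw [uK_renewal_Γ hΓ hsupp hsemi hposmat hν hinv hμ hμpos (N j - m) hx γ β]
    rw [tsum_eq_sum (s := (range (N j - m + 1)) ×ˢ (univ : Finset (ZMod T)))
      (fun q hq => by
        have : ¬ q.1 ≤ N j - m := by
          intro hle
          exact hq (Finset.mem_product.2
            ⟨Finset.mem_range.2 (by omega), Finset.mem_univ _⟩)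
        simp [this])]
    rw [Finset.sum_product]
    refine Finset.sum_congr rfl fun y hy => Finset.sum_congr rfl fun c _ => ?_
    have hyle : y ≤ N j - m := by
      have := Finset.mem_range.1 hy; omega
    rw [if_pos hyle]
    congr 2
    omega
  have hdom : Tendsto (fun j => ∑' q : ℕ × ZMod T,
      (if q.1 ≤ N j - m then Γ q.1 γ q.2 * uK Γ (N j - (m + q.1)) q.2 β else 0)) atTop
      (nhds (∑' q : ℕ × ZMod T, Γ q.1 γ q.2 * vv q.2 (m + q.1))) := by
    refine tendsto_tsum_of_dominated_convergence
      (bound := fun q : ℕ × ZMod T => Γ q.1 γ q.2 * B)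
      ((hsemi γ).summable.mul_right B) (fun q => ?_) ?_
    · -- pointwise convergence
      have hind : ∀ᶠ j in atTop, q.1 ≤ N j - m := by
        filter_upwards [hNtop.eventually (eventually_ge_atTop (m + q.1 + 1))] with j hj
        omega
      have := ((hlim q.2 (m + q.1)).const_mul (Γ q.1 γ q.2)).congr'
        (by filter_upwards with j; rfl)
      refine (this.congr' ?_)
      filter_upwards [hind] with j hj
      rw [if_pos hj]
    · filter_upwards with j
      intro q
      rcases le_or_gt q.1 (N j - m) with h | h
      · rw [if_pos h, Real.norm_eq_abs, abs_of_nonneg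
          (mul_nonneg (hΓ _ _ _) (uK_nonneg hΓ _ _ _))]
        exact mul_le_mul_of_nonneg_left
          (uK_Γ_le hΓ hsupp hsemi hposmat hν hinv hμ hμpos _ _ _) (hΓ _ _ _)
      · rw [if_neg (by omega), norm_zero]
        exact mul_nonneg (hΓ _ _ _) hBnn
  have hLHS : Tendsto (fun j => uK Γ (N j - m) γ β) atTop
      (nhds (∑' q : ℕ × ZMod T, Γ q.1 γ q.2 * vv q.2 (m + q.1))) := by
    refine hdom.congr' ?_
    filter_upwards [hNtop.eventually (eventually_ge_atTop (m+1))] with j hj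
    exact (hstep j hj).symm
  exact tendsto_nhds_unique (hlim γ m) hLHS

include hΓ hsupp hsemi hposmat hν hνsum hinv hμ hμpos in
lemma vv_identity (β : ZMod T) (N : ℕ → ℕ) (vv : ZMod T → ℕ → ℝ)
    (hNtop : Tendsto N atTop atTop)
    (hlim : ∀ γ m, Tendsto (fun j => uK Γ (N j - m) γ β) atTop (nhds (vv γ m))) :
    ∑' q : ℕ × ZMod T, (ν q.2 / ν β) * vv q.2 q.1 * tl (hatK Γ ν) q.2 q.1 = 1 := by
  classical
  set B := (1 - pmax Γ)⁻¹ with hB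
  have hBnn : 0 ≤ B := by
    have := pmax_lt_one hΓ hsupp hsemi hposmat hμ hμpos
    rw [hB]
    have h1 : (0:ℝ) < 1 - pmax Γ := by linarith
    exact inv_nonneg.2 h1.le
  have hstep : ∀ j : ℕ,
      (∑' q : ℕ × ZMod T, (if q.1 ≤ N j then
        (ν q.2 / ν β) * uK Γ (N j - q.1) q.2 β * tl (hatK Γ ν) q.2 q.1 else 0)) = 1 := by
    intro j
    rw [tsum_eq_sum (s := (range (N j + 1)) ×ˢ (univ : Finset (ZMod T)))
      (fun q hq => by
        have : ¬ q.1 ≤ N j := by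
          intro hle
          exact hq (Finset.mem_product.2
            ⟨Finset.mem_range.2 (by omega), Finset.mem_univ _⟩)
        simp [this])]
    rw [Finset.sum_product]
    have h0 := tail_hat_eq_one hΓ hsupp hsemi hposmat hν hinv hμ hμpos (N j) β
    rw [← Finset.sum_range_reflect] at h0
    rw [← h0]
    refine Finset.sum_congr rfl fun s hs => Finset.sum_congr rfl fun c _ => ?_
    have hsle : s ≤ N j := by
      have := Finset.mem_range.1 hs; omega
    rw [if_pos hsle]
    have h1 : N j + 1 - 1 - s = N j - s := by omega
    have h2 : N j - (N j - s) = s := by omega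
    rw [h1, h2]
    rw [uK_hat hΓ hsupp hsemi hposmat hν hinv hμ hμpos]
    ring
  have hdom : Tendsto (fun j => ∑' q : ℕ × ZMod T,
      (if q.1 ≤ N j then
        (ν q.2 / ν β) * uK Γ (N j - q.1) q.2 β * tl (hatK Γ ν) q.2 q.1 else 0)) atTop
      (nhds (∑' q : ℕ × ZMod T, (ν q.2 / ν β) * vv q.2 q.1 * tl (hatK Γ ν) q.2 q.1)) := by
    refine tendsto_tsum_of_dominated_convergence
      (bound := fun q : ℕ × ZMod T => (ν q.2 / ν β) * B * tl (hatK Γ ν) q.2 q.1)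
      ?_ (fun q => ?_) ?_
    · -- summability of the bound
      have h1 : ∀ c : ZMod T, Summable (fun s : ℕ => (ν c / ν β) * B * tl (hatK Γ ν) c s) :=
        fun c => ((summable_tl_hat hΓ hsupp hsemi hposmat hν hνsum hinv hμ hμpos c).mul_left _)
      have := hasSum_prod_fintype
        (fun q : ℕ × ZMod T => (ν q.2 / ν β) * B * tl (hatK Γ ν) q.2 q.1)
        (fun c => ∑' s, (ν c / ν β) * B * tl (hatK Γ ν) c s)
        (fun c => (h1 c).hasSum)
      exact this.summable
    · -- pointwise convergence
      have hind : ∀ᶠ j in atTop, q.1 ≤ N j := by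
        filter_upwards [hNtop.eventually (eventually_ge_atTop q.1)] with j hj
        omega
      have hl := hlim q.2 q.1
      have h2 : Tendsto (fun j => (ν q.2 / ν β) * uK Γ (N j - q.1) q.2 β
          * tl (hatK Γ ν) q.2 q.1) atTop
          (nhds ((ν q.2 / ν β) * vv q.2 q.1 * tl (hatK Γ ν) q.2 q.1)) :=
        (hl.const_mul _).mul_const _
      refine h2.congr' ?_
      filter_upwards [hind] with j hj
      rw [if_pos hj]
    · filter_upwards with j
      intro q
      have hnn1 : 0 ≤ ν q.2 / ν β := div_nonneg (hν _).le (hν _).le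
      have htl0 : 0 ≤ tl (hatK Γ ν) q.2 q.1 :=
        tl_nonneg (hatK_nonneg hΓ hν) (hatK_hasSum_one hsemi hν hinv) _ _
      rcases le_or_gt q.1 (N j) with h | h
      · rw [if_pos h, Real.norm_eq_abs, abs_of_nonneg (by
          exact mul_nonneg (mul_nonneg hnn1 (uK_nonneg hΓ _ _ _)) htl0)]
        refine mul_le_mul_of_nonneg_right ?_ htl0
        exact mul_le_mul_of_nonneg_left
          (uK_Γ_le hΓ hsupp hsemi hposmat hν hinv hμ hμpos _ _ _) hnn1
      · rw [if_neg (by omega), norm_zero]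
        exact mul_nonneg (mul_nonneg hnn1 hBnn) htl0
  have := hdom.congr' (by
    filter_upwards with j
    exact hstep j)
  exact (tendsto_nhds_unique this tendsto_const_nhds)

end limits
end MRT3
namespace MRT3
open MRT MRT2 Finset Filter Matrix

variable {T : ℕ} [NeZero T]
variable {Γ : ℕ → Matrix (ZMod T) (ZMod T) ℝ} {ν : ZMod T → ℝ} {μ : ℝ}

section prop

variable
    (hΓ : ∀ x α β, 0 ≤ Γ x α β)
    (hsupp : ∀ (x : ℕ) (α β : ZMod T), (x : ZMod T) ≠ β - α → Γ x α β = 0)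
    (hsemi : ∀ α : ZMod T, HasSum (fun p : ℕ × ZMod T => Γ p.1 α p.2) 1)
    (hposmat : ∀ α β : ZMod T, 0 < ∑' x : ℕ, Γ x α β)
    (hν : ∀ α, 0 < ν α) (hνsum : ∑ α, ν α = 1)
    (hinv : ∀ β, ∑ α, ν α * ∑' x : ℕ, Γ x α β = ν β)
    (hμ : HasSum (fun p : ℕ × ZMod T × ZMod T =>
      (p.1 : ℝ) * ν p.2.1 * Γ p.1 p.2.1 p.2.2) μ)
    (hμpos : 0 < μ)
    (haper : ∀ α β : ZMod T, ∀ᶠ x : ℕ in atTop, (x : ZMod T) = β - α → 0 < Γ x α β)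

include hΓ hsupp hsemi hposmat hμ hμpos haper in
lemma prop_const (γ0 : ZMod T) (vv : ZMod T → ℕ → ℝ) (L B : ℝ)
    (hvle : ∀ γ m, ((m : ℕ) : ZMod T) = γ - γ0 → vv γ m ≤ L)
    (h00 : vv γ0 0 = L)
    (habs : ∀ γ m, |vv γ m| ≤ B)
    (heqn : ∀ γ m, vv γ m = ∑' q : ℕ × ZMod T, Γ q.1 γ q.2 * vv q.2 (m + q.1)) :
    ∀ γ m, ((m : ℕ) : ZMod T) = γ - γ0 → vv γ m = L := by
  classical
  have hS2 : ∀ γ (m : ℕ), Summable (fun q : ℕ × ZMod T => Γ q.1 γ q.2 * vv q.2 (m + q.1)) := by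
    intro γ m
    refine Summable.of_abs ?_
    refine Summable.of_nonneg_of_le (fun q => abs_nonneg _) (fun q => ?_)
      ((hsemi γ).summable.mul_right B)
    rw [abs_mul, abs_of_nonneg (hΓ _ _ _)]
    exact mul_le_mul_of_nonneg_left (habs _ _) (hΓ _ _ _)
  have one_step : ∀ γ (m : ℕ), ((m : ℕ) : ZMod T) = γ - γ0 → vv γ m = L →
      ∀ (y : ℕ) (c : ZMod T), 0 < Γ y γ c → vv c (m + y) = L := by
    intro γ m hm hvL y c hpos
    set d : ℕ × ZMod T → ℝ := fun q => Γ q.1 γ q.2 * (L - vv q.2 (m + q.1)) with hd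
    have hdnn : ∀ q, 0 ≤ d q := by
      intro q
      rcases eq_or_ne (Γ q.1 γ q.2) 0 with h0 | h0
      · simp [hd, h0]
      · have hr : ((q.1 : ℕ) : ZMod T) = q.2 - γ := by
          by_contra hne
          exact h0 (hsupp q.1 γ q.2 hne)
        have hval : ((m + q.1 : ℕ) : ZMod T) = q.2 - γ0 := by
          push_cast
          push_cast at hm hr
          rw [hm, hr]; ring
        exact mul_nonneg (hΓ _ _ _) (sub_nonneg.2 (hvle q.2 (m + q.1) hval))
    have hd_sum : Summable d := by
      have := ((hsemi γ).summable.mul_right L).sub (hS2 γ m)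
      exact this.congr fun q => by rw [hd]; ring
    have htsum_d : ∑' q, d q = 0 := by
      have hh : ∀ q : ℕ × ZMod T, d q
          = Γ q.1 γ q.2 * L - Γ q.1 γ q.2 * vv q.2 (m + q.1) := fun q => by rw [hd]; ring
      rw [tsum_congr hh, Summable.tsum_sub ((hsemi γ).summable.mul_right L) (hS2 γ m)]
      rw [tsum_mul_right, (hsemi γ).tsum_eq, one_mul, ← heqn γ m, hvL]
      ring
    have hzero : d (y, c) = 0 := by
      by_contra hne
      have hdpos : 0 < d (y, c) := lt_of_le_of_ne (hdnn _) (Ne.symm hne)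
      have := Summable.tsum_pos hd_sum hdnn (y, c) hdpos
      rw [htsum_d] at this
      exact lt_irrefl 0 this
    rcases mul_eq_zero.1 hzero with h | h
    · exact absurd h hpos.ne'
    · have := sub_eq_zero.1 h
      linarith
  obtain ⟨X, hX⟩ : ∃ X : ℕ, ∀ y, X ≤ y → ∀ c : ZMod T,
      ((y : ℕ) : ZMod T) = c - γ0 → 0 < Γ y γ0 c := by
    have hall : ∀ᶠ y : ℕ in atTop, ∀ c : ZMod T, ((y:ℕ) : ZMod T) = c - γ0 → 0 < Γ y γ0 c :=
      eventually_all.2 fun c => haper γ0 c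
    obtain ⟨X, hX⟩ := eventually_atTop.1 hall
    exact ⟨X, fun y hy => hX y hy⟩
  have base : ∀ (c : ZMod T) (m : ℕ), X ≤ m → ((m:ℕ) : ZMod T) = c - γ0 → vv c m = L := by
    intro c m hXm hmc
    have h0 : ((0:ℕ) : ZMod T) = γ0 - γ0 := by simp
    have := one_step γ0 0 h0 h00 m c (hX m hXm c hmc)
    rwa [zero_add] at this
  have down : ∀ (n : ℕ) (c : ZMod T) (m : ℕ),
      ((m:ℕ) : ZMod T) = c - γ0 → X ≤ m + n → vv c m = L := by
    intro n
    induction n with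
    | zero =>
      intro c m hmc hXm
      exact base c m (by omega) hmc
    | succ n ih =>
      intro c m hmc hXmn
      by_cases hXm : X ≤ m
      · exact base c m hXm hmc
      · have hdiag : Γ 0 c c < 1 := diag_lt_one hΓ hsupp hsemi hposmat hμ hμpos c
        have hptw : ∀ q : ℕ × ZMod T, Γ q.1 c q.2 * vv q.2 (m + q.1)
            = Γ q.1 c q.2 * L + (if q = ((0:ℕ), c) then Γ 0 c c * (vv c m - L) else 0) := by
          intro q
          rcases eq_or_ne q ((0:ℕ), c) with rfl | hq
          · simp only [if_pos rfl]
            norm_num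
            ring
          · rw [if_neg hq, add_zero]
            rcases eq_or_ne (Γ q.1 c q.2) 0 with h0 | h0
            · rw [h0, zero_mul, zero_mul]
            · have hr : ((q.1 : ℕ) : ZMod T) = q.2 - c := by
                by_contra hne
                exact h0 (hsupp q.1 c q.2 hne)
              have hq1 : 1 ≤ q.1 := by
                by_contra h1
                push_neg at h1
                have hq10 : q.1 = 0 := by omega
                have hq2 : q.2 = c := by
                  rw [hq10] at hr
                  push_cast at hr
                  exact sub_eq_zero.mp hr.symm
                exact hq (Prod.ext hq10 hq2)
              have hresm : ((m + q.1 : ℕ) : ZMod T) = q.2 - γ0 := by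
                push_cast
                push_cast at hmc hr
                rw [hmc, hr]; ring
              rw [ih q.2 (m + q.1) hresm (by omega)]
        have hsum_ite : Summable (fun q : ℕ × ZMod T =>
            (if q = ((0:ℕ), c) then Γ 0 c c * (vv c m - L) else 0)) :=
          summable_of_ne_finset_zero (s := {((0:ℕ), c)})
            (fun q hq => if_neg (by simpa using hq))
        have h2 : vv c m = L + Γ 0 c c * (vv c m - L) := by
          calc vv c m = ∑' q : ℕ × ZMod T, Γ q.1 c q.2 * vv q.2 (m + q.1) := heqn c m
            _ = ∑' q : ℕ × ZMod T, (Γ q.1 c q.2 * L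
                + (if q = ((0:ℕ), c) then Γ 0 c c * (vv c m - L) else 0)) :=
                  tsum_congr hptw
            _ = (∑' q : ℕ × ZMod T, Γ q.1 c q.2 * L)
                + ∑' q : ℕ × ZMod T, (if q = ((0:ℕ), c) then Γ 0 c c * (vv c m - L) else 0) :=
                  Summable.tsum_add ((hsemi c).summable.mul_right L) hsum_ite
            _ = L + Γ 0 c c * (vv c m - L) := by
                rw [tsum_mul_right, (hsemi c).tsum_eq, one_mul, tsum_ite_eq]
        have h3 : (vv c m - L) * (1 - Γ 0 c c) = 0 := by linear_combination h2
        rcases mul_eq_zero.1 h3 with h | h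
        · linarith [sub_eq_zero.1 h]
        · exfalso
          have : Γ 0 c c = 1 := by linarith
          linarith
  intro γ m hm
  exact down X γ m hm (by omega)

include hΓ hsupp hsemi hposmat hν hνsum hinv hμ hμpos in
lemma value_const (β γ0 : ZMod T) (C : ℝ) (vv : ZMod T → ℕ → ℝ)
    (hvv : ∀ γ (s : ℕ), vv γ s = (if ((s:ℕ) : ZMod T) = γ - γ0 then C else 0))
    (hident : ∑' q : ℕ × ZMod T, (ν q.2 / ν β) * vv q.2 q.1 * tl (hatK Γ ν) q.2 q.1 = 1) :
    C = T * ν β / μ := by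
  have hs := (hasSum_nu_tl hΓ hsupp hsemi hposmat hν hνsum hinv hμ hμpos γ0).mul_left (C / ν β)
  have h1 : HasSum (fun q : ℕ × ZMod T =>
      (ν q.2 / ν β) * vv q.2 q.1 * tl (hatK Γ ν) q.2 q.1) ((C / ν β) * (μ / T)) := by
    refine hs.congr_fun fun q => ?_
    rw [hvv]
    by_cases h : ((q.1 : ℕ) : ZMod T) = q.2 - γ0
    · rw [if_pos h, if_pos h]; ring
    · rw [if_neg h, if_neg h]; ring
  have h2 : (C / ν β) * (μ / T) = 1 := by rw [← h1.tsum_eq, hident]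
  have hνβ : ν β ≠ 0 := (hν β).ne'
  have hμne : μ ≠ 0 := hμpos.ne'
  have hTne : (T:ℝ) ≠ 0 := Nat.cast_ne_zero.2 (NeZero.ne T)
  field_simp at h2
  rw [eq_div_iff hμne]
  linarith

end prop
end MRT3
namespace MRT3
open MRT MRT2 Finset Filter Matrix

variable {T : ℕ} [NeZero T]
variable {Γ : ℕ → Matrix (ZMod T) (ZMod T) ℝ} {ν : ZMod T → ℝ} {μ : ℝ}

section key

variable
    (hΓ : ∀ x α β, 0 ≤ Γ x α β)
    (hsupp : ∀ (x : ℕ) (α β : ZMod T), (x : ZMod T) ≠ β - α → Γ x α β = 0)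
    (hsemi : ∀ α : ZMod T, HasSum (fun p : ℕ × ZMod T => Γ p.1 α p.2) 1)
    (hposmat : ∀ α β : ZMod T, 0 < ∑' x : ℕ, Γ x α β)
    (hν : ∀ α, 0 < ν α) (hνsum : ∑ α, ν α = 1)
    (hinv : ∀ β, ∑ α, ν α * ∑' x : ℕ, Γ x α β = ν β)
    (hμ : HasSum (fun p : ℕ × ZMod T × ZMod T =>
      (p.1 : ℝ) * ν p.2.1 * Γ p.1 p.2.1 p.2.2) μ)
    (hμpos : 0 < μ)
    (haper : ∀ α β : ZMod T, ∀ᶠ x : ℕ in atTop, (x : ZMod T) = β - α → 0 < Γ x α β)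

include hΓ hsupp hsemi hposmat hν hinv hμ hμpos in
lemma abs_a_le (β γ : ZMod T) (n : ℕ) :
    |uK Γ ((β - γ).val + T * n) γ β| ≤ (1 - pmax Γ)⁻¹ := by
  rw [abs_of_nonneg (uK_nonneg hΓ _ _ _)]
  exact uK_Γ_le hΓ hsupp hsemi hposmat hν hinv hμ hμpos _ _ _

include hΓ hsupp hsemi hposmat hν hinv hμ hμpos in
lemma vv_le_limsup (β γ0 : ZMod T) (N : ℕ → ℕ) (vv : ZMod T → ℕ → ℝ)
    (hNtop : Tendsto N atTop atTop)
    (hres : ∀ j, ((N j : ℕ) : ZMod T) = β - γ0)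
    (hlim : ∀ γ m, Tendsto (fun j => uK Γ (N j - m) γ β) atTop (nhds (vv γ m)))
    (γ : ZMod T) (m : ℕ) (hm : ((m:ℕ) : ZMod T) = γ - γ0) :
    vv γ m ≤ limsup (fun n => uK Γ ((β - γ).val + T * n) γ β) atTop := by
  set r := (β - γ).val with hr
  set a : ℕ → ℝ := fun n => uK Γ (r + T * n) γ β with ha
  set Lb := limsup a atTop with hLb
  have habs : ∀ n, |a n| ≤ (1 - pmax Γ)⁻¹ :=
    fun n => abs_a_le hΓ hsupp hsemi hposmat hν hinv hμ hμpos β γ n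
  refine le_of_forall_pos_le_add fun ε hε => ?_
  have h1 : ∀ᶠ n in atTop, a n < Lb + ε :=
    eventually_lt_of_limsup_lt (lt_add_of_pos_right _ hε) (bounded_of_abs_le habs)
  obtain ⟨M, hM⟩ := eventually_atTop.1 h1
  have h2 : ∀ᶠ j in atTop, uK Γ (N j - m) γ β < Lb + ε := by
    filter_upwards [hNtop.eventually (eventually_ge_atTop (m + r + T * M + 1))] with j hj
    have hcast : ((N j - m : ℕ) : ZMod T) = β - γ := by
      rw [Nat.cast_sub (by omega), hres j, hm]
      ring
    obtain ⟨k, hk⟩ := (ZMod.natCast_eq_iff T _ _).1 hcast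
    have hkM : M ≤ k := by
      by_contra hlt
      push_neg at hlt
      have hmul : T * k ≤ T * M := Nat.mul_le_mul_left T (by omega)
      omega
    have hak := hM k hkM
    have heq : uK Γ (N j - m) γ β = a k := by rw [ha, hk]
    rw [heq]
    exact hak
  exact le_of_tendsto (hlim γ m) (h2.mono fun j hj => hj.le)

include hΓ hsupp hsemi hposmat hν hνsum hinv hμ hμpos haper in
lemma key_tendsto (β : ZMod T) : ∀ γ0 : ZMod T,
    Tendsto (fun n => uK Γ ((β - γ0).val + T * n) γ0 β) atTop
      (nhds ((T : ℝ) * ν β / μ)) := by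
  classical
  set c : ℝ := (T : ℝ) * ν β / μ with hc
  set B : ℝ := (1 - pmax Γ)⁻¹ with hB
  set a : ZMod T → ℕ → ℝ := fun γ n => uK Γ ((β - γ).val + T * n) γ β with ha
  have habs : ∀ γ n, |a γ n| ≤ B :=
    fun γ n => abs_a_le hΓ hsupp hsemi hposmat hν hinv hμ hμpos β γ n
  have hTpos : 0 < T := Nat.pos_of_ne_zero (NeZero.ne T)
  -- Step 1: all limsups are ≤ c (in fact the max equals c)
  have hstep1 : ∀ γ : ZMod T, limsup (a γ) atTop ≤ c := by
    obtain ⟨γ1, _, hγ1⟩ := Finset.exists_max_image Finset.univ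
      (fun γ => limsup (a γ) atTop) Finset.univ_nonempty
    set L := limsup (a γ1) atTop with hL
    suffices hLc : L = c by
      intro γ
      rw [← hLc]
      exact hγ1 γ (Finset.mem_univ γ)
    obtain ⟨φ, hφj, hφ⟩ := exists_subseq_tendsto_limsup (habs γ1)
    set N : ℕ → ℕ := fun j => (β - γ1).val + T * φ j with hN
    have hNtop : Tendsto N atTop atTop := by
      refine tendsto_atTop_mono (fun j => ?_) tendsto_id
      have h1 : j ≤ φ j := hφj j
      have h2 : φ j ≤ T * φ j := Nat.le_mul_of_pos_left _ hTpos
      simp only [hN, id]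
      omega
    have hres : ∀ j, ((N j : ℕ) : ZMod T) = β - γ1 := by
      intro j
      show (((β - γ1).val + T * φ j : ℕ) : ZMod T) = β - γ1
      have h1 : (((β - γ1).val : ℕ) : ZMod T) = β - γ1 := natCast_val_eq _
      have h2 : ((T : ℕ) : ZMod T) = 0 := ZMod.natCast_self T
      push_cast
      rw [h1, h2]
      ring
    obtain ⟨ψ, vv, hψmono, hvlim, hvbd⟩ :=
      diag_limits hΓ hsupp hsemi hposmat hν hinv hμ hμpos β N
    set N' : ℕ → ℕ := N ∘ ψ with hN'
    have hN'top : Tendsto N' atTop atTop := hNtop.comp hψmono.tendsto_atTop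
    have hres' : ∀ j, ((N' j : ℕ) : ZMod T) = β - γ1 := fun j => hres (ψ j)
    have h00 : vv γ1 0 = L := by
      have h1 : Tendsto (fun j => uK Γ (N' j - 0) γ1 β) atTop (nhds L) := by
        have h2 := hφ.comp hψmono.tendsto_atTop
        refine h2.congr fun j => ?_
        simp only [hN', hN, Function.comp, Nat.sub_zero, ha]
      exact tendsto_nhds_unique (hvlim γ1 0) h1
    have hvle : ∀ γ m, ((m:ℕ) : ZMod T) = γ - γ1 → vv γ m ≤ L := by
      intro γ m hm
      refine le_trans
        (vv_le_limsup hΓ hsupp hsemi hposmat hν hinv hμ hμpos β γ1 N' vv hN'top hres'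
          hvlim γ m hm) ?_
      exact hγ1 γ (Finset.mem_univ γ)
    have habs' : ∀ γ m, |vv γ m| ≤ B := by
      intro γ m
      rw [abs_of_nonneg (hvbd γ m).1]
      exact (hvbd γ m).2
    have heqn : ∀ γ m, vv γ m = ∑' q : ℕ × ZMod T, Γ q.1 γ q.2 * vv q.2 (m + q.1) :=
      fun γ m => vv_harmonic hΓ hsupp hsemi hposmat hν hinv hμ hμpos β N' vv hN'top hvlim γ m
    have hprop := prop_const hΓ hsupp hsemi hposmat hμ hμpos haper γ1 vv L B hvle h00 habs' heqn
    have hident := vv_identity hΓ hsupp hsemi hposmat hν hνsum hinv hμ hμpos β N' vv hN'top hvlim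
    have hvv_form : ∀ γ (s : ℕ), vv γ s = (if ((s:ℕ) : ZMod T) = γ - γ1 then L else 0) := by
      intro γ s
      by_cases h : ((s:ℕ) : ZMod T) = γ - γ1
      · rw [if_pos h]; exact hprop γ s h
      · rw [if_neg h]
        exact vv_support hΓ hsupp hsemi hposmat hν hinv hμ hμpos β γ1 N' vv hN'top hres'
          hvlim γ s h
    exact value_const hΓ hsupp hsemi hposmat hν hνsum hinv hμ hμpos β γ1 L vv hvv_form hident
  -- Step 2: arbitrary subsequences converge to c
  intro γ0
  refine tendsto_of_subseq_tendsto fun ns hns => ?_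
  set N : ℕ → ℕ := fun j => (β - γ0).val + T * ns j with hN
  have hNtop : Tendsto N atTop atTop := by
    have hle : ∀ j, ns j ≤ N j := by
      intro j
      show ns j ≤ (β - γ0).val + T * ns j
      have : ns j ≤ T * ns j := Nat.le_mul_of_pos_left _ hTpos
      omega
    exact tendsto_atTop_mono hle hns
  have hres : ∀ j, ((N j : ℕ) : ZMod T) = β - γ0 := by
    intro j
    show (((β - γ0).val + T * ns j : ℕ) : ZMod T) = β - γ0
    have h1 : (((β - γ0).val : ℕ) : ZMod T) = β - γ0 := natCast_val_eq _
    have h2 : ((T : ℕ) : ZMod T) = 0 := ZMod.natCast_self T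
    push_cast
    rw [h1, h2]
    ring
  obtain ⟨ψ, vv, hψmono, hvlim, hvbd⟩ :=
    diag_limits hΓ hsupp hsemi hposmat hν hinv hμ hμpos β N
  set N' : ℕ → ℕ := N ∘ ψ with hN'
  have hN'top : Tendsto N' atTop atTop := hNtop.comp hψmono.tendsto_atTop
  have hres' : ∀ j, ((N' j : ℕ) : ZMod T) = β - γ0 := fun j => hres (ψ j)
  have hident := vv_identity hΓ hsupp hsemi hposmat hν hνsum hinv hμ hμpos β N' vv hN'top hvlim
  have hvle : ∀ γ m, ((m:ℕ) : ZMod T) = γ - γ0 → vv γ m ≤ c := by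
    intro γ m hm
    refine le_trans
      (vv_le_limsup hΓ hsupp hsemi hposmat hν hinv hμ hμpos β γ0 N' vv hN'top hres'
        hvlim γ m hm) (hstep1 γ)
  have hsupp0 : ∀ γ (s : ℕ), ((s:ℕ) : ZMod T) ≠ γ - γ0 → vv γ s = 0 :=
    fun γ s h => vv_support hΓ hsupp hsemi hposmat hν hinv hμ hμpos β γ0 N' vv hN'top hres'
      hvlim γ s h
  -- force vv γ0 0 = c
  have hvv00 : vv γ0 0 = c := by
    set g : ℕ × ZMod T → ℝ := fun q =>
      (c / ν β) * ((if ((q.1:ℕ) : ZMod T) = q.2 - γ0 then (1:ℝ) else 0)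
        * (ν q.2 * tl (hatK Γ ν) q.2 q.1)) with hg
    set f : ℕ × ZMod T → ℝ := fun q =>
      (ν q.2 / ν β) * vv q.2 q.1 * tl (hatK Γ ν) q.2 q.1 with hf
    have hgs : HasSum g ((c / ν β) * (μ / T)) :=
      (hasSum_nu_tl hΓ hsupp hsemi hposmat hν hνsum hinv hμ hμpos γ0).mul_left _
    have hcnorm : (c / ν β) * (μ / T) = 1 := by
      have h1 : ν β ≠ 0 := (hν β).ne'
      have h2 : μ ≠ 0 := hμpos.ne'
      have h3 : (T:ℝ) ≠ 0 := Nat.cast_ne_zero.2 (NeZero.ne T)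
      rw [hc]
      field_simp
    have hcpos : 0 ≤ c := by
      rw [hc]
      have := (hν β).le
      positivity
    have htl0 : ∀ γ (s : ℕ), 0 ≤ tl (hatK Γ ν) γ s :=
      fun γ s => tl_nonneg (hatK_nonneg hΓ hν) (hatK_hasSum_one hsemi hν hinv) _ _
    have hfg : ∀ q, f q ≤ g q := by
      intro q
      show (ν q.2 / ν β) * vv q.2 q.1 * tl (hatK Γ ν) q.2 q.1
        ≤ (c / ν β) * ((if ((q.1:ℕ) : ZMod T) = q.2 - γ0 then (1:ℝ) else 0)
          * (ν q.2 * tl (hatK Γ ν) q.2 q.1))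
      by_cases h : ((q.1:ℕ) : ZMod T) = q.2 - γ0
      · rw [if_pos h]
        have h1 : vv q.2 q.1 ≤ c := hvle q.2 q.1 h
        have h2 : 0 ≤ ν q.2 / ν β := div_nonneg (hν _).le (hν _).le
        have h3 := htl0 q.2 q.1
        have h4 := (hν q.2).le
        have h5 := (hν β).le
        calc (ν q.2 / ν β) * vv q.2 q.1 * tl (hatK Γ ν) q.2 q.1
            ≤ (ν q.2 / ν β) * c * tl (hatK Γ ν) q.2 q.1 := by
              refine mul_le_mul_of_nonneg_right ?_ h3
              exact mul_le_mul_of_nonneg_left h1 h2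
          _ = (c / ν β) * ((1:ℝ) * (ν q.2 * tl (hatK Γ ν) q.2 q.1)) := by ring
      · rw [if_neg h, hsupp0 q.2 q.1 h]
        simp
    have hfnn : ∀ q, 0 ≤ f q := by
      intro q
      show 0 ≤ (ν q.2 / ν β) * vv q.2 q.1 * tl (hatK Γ ν) q.2 q.1
      by_cases h : ((q.1:ℕ) : ZMod T) = q.2 - γ0
      · exact mul_nonneg (mul_nonneg (div_nonneg (hν _).le (hν _).le)
          (hvbd q.2 q.1).1) (htl0 _ _)
      · rw [hsupp0 q.2 q.1 h]
        simp
    have hfsum : Summable f :=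
      Summable.of_nonneg_of_le hfnn hfg hgs.summable
    set d : ℕ × ZMod T → ℝ := fun q => g q - f q with hd
    have hdnn : ∀ q, 0 ≤ d q := fun q => sub_nonneg.2 (hfg q)
    have hdsum : Summable d := hgs.summable.sub hfsum
    have hdtsum : ∑' q, d q = 0 := by
      rw [hd]
      rw [Summable.tsum_sub hgs.summable hfsum]
      rw [hgs.tsum_eq, hcnorm]
      have : ∑' q, f q = 1 := hident
      rw [this]
      ring
    have hd0 : d ((0:ℕ), γ0) = 0 := by
      by_contra hne
      have hdpos : 0 < d ((0:ℕ), γ0) := lt_of_le_of_ne (hdnn _) (Ne.symm hne)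
      have := Summable.tsum_pos hdsum hdnn ((0:ℕ), γ0) hdpos
      rw [hdtsum] at this
      exact lt_irrefl 0 this
    have hval0 : (((0:ℕ):ℕ) : ZMod T) = γ0 - γ0 := by simp
    have hterm : d ((0:ℕ), γ0)
        = (c / ν β) * (ν γ0 * tl (hatK Γ ν) γ0 0)
          - (ν γ0 / ν β) * vv γ0 0 * tl (hatK Γ ν) γ0 0 := by
      show g ((0:ℕ), γ0) - f ((0:ℕ), γ0) = _
      have hgval : g ((0:ℕ), γ0) = (c / ν β) * (ν γ0 * tl (hatK Γ ν) γ0 0) := by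
        show (c / ν β) * ((if (((0:ℕ):ℕ) : ZMod T) = γ0 - γ0 then (1:ℝ) else 0)
          * (ν γ0 * tl (hatK Γ ν) γ0 0)) = _
        rw [if_pos hval0, one_mul]
      have hfval : f ((0:ℕ), γ0) = (ν γ0 / ν β) * vv γ0 0 * tl (hatK Γ ν) γ0 0 := rfl
      rw [hgval, hfval]
    rw [hterm] at hd0
    have htlpos : 0 < tl (hatK Γ ν) γ0 0 :=
      tl_hat_pos hΓ hsupp hsemi hposmat hν hinv hμ hμpos haper γ0 0
    have hd0' : (ν γ0 / ν β) * tl (hatK Γ ν) γ0 0 * (c - vv γ0 0) = 0 := by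
      have hνβ : ν β ≠ 0 := (hν β).ne'
      field_simp at hd0 ⊢
      linarith [hd0]
    have hfac : (ν γ0 / ν β) * tl (hatK Γ ν) γ0 0 ≠ 0 := by
      have := hν γ0
      have := hν β
      positivity
    rcases mul_eq_zero.1 hd0' with h | h
    · exact absurd h hfac
    · linarith [sub_eq_zero.1 h]
  -- conclude
  refine ⟨ψ, ?_⟩
  have h1 : Tendsto (fun j => uK Γ (N' j - 0) γ0 β) atTop (nhds c) := by
    rw [← hvv00]
    exact hvlim γ0 0
  refine h1.congr fun j => ?_
  simp only [hN', hN, Function.comp, Nat.sub_zero, ha]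

end key
end MRT3

/-- Markov renewal theorem in the periodic setting: for a semi-Markov kernel `Γ` on
`S = ℤ/Tℤ` supported on `x ≡ β - α (mod T)`, with positive modulating transition
matrix, invariant law `ν` and finite positive mean `μ`, the Markov–Green function
`U_{α,β}(x) = Σ_{k ≥ 1} [Γ^{*k}]_{α,β}(x)` converges to `T ν_β / μ` as `x → ∞` along
`x ≡ β - α (mod T)`. -/
theorem markov_renewal_theorem_periodic
    {T : ℕ} [NeZero T]
    (Γ : ℕ → Matrix (ZMod T) (ZMod T) ℝ) (ν : ZMod T → ℝ) (μ : ℝ)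
    (hΓ : ∀ x α β, 0 ≤ Γ x α β)
    (hsupp : ∀ (x : ℕ) (α β : ZMod T), (x : ZMod T) ≠ β - α → Γ x α β = 0)
    (hsemi : ∀ α : ZMod T, HasSum (fun p : ℕ × ZMod T => Γ p.1 α p.2) 1)
    (hposmat : ∀ α β : ZMod T, 0 < ∑' x : ℕ, Γ x α β)
    (hν : ∀ α, 0 < ν α) (hνsum : ∑ α, ν α = 1)
    (hinv : ∀ β, ∑ α, ν α * ∑' x : ℕ, Γ x α β = ν β)
    (hμ : HasSum (fun p : ℕ × ZMod T × ZMod T =>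
      (p.1 : ℝ) * ν p.2.1 * Γ p.1 p.2.1 p.2.2) μ)
    (hμpos : 0 < μ)
    (haper : ∀ α β : ZMod T, ∀ᶠ x : ℕ in atTop, (x : ZMod T) = β - α → 0 < Γ x α β) :
    ∀ α β : ZMod T,
      Tendsto (fun x : ℕ => ∑' k : ℕ, (kpow Γ (k + 1)) x α β)
        (atTop ⊓ Filter.principal {x : ℕ | (x : ZMod T) = β - α})
        (nhds (T * ν β / μ)) := by
  intro α β
  have hkey := MRT3.key_tendsto hΓ hsupp hsemi hposmat hν hνsum hinv hμ hμpos haper β α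
  rw [Filter.tendsto_def]
  intro s hs
  have h1 := hkey hs
  rw [Filter.mem_map] at h1
  obtain ⟨M, hM⟩ := Filter.mem_atTop_sets.1 h1
  rw [Filter.mem_inf_principal]
  refine Filter.mem_of_superset (Filter.mem_atTop ((β - α).val + T * M + 1)) ?_
  intro x hx
  simp only [Set.mem_setOf_eq] at hx ⊢
  intro hxres
  obtain ⟨k, hk⟩ := (ZMod.natCast_eq_iff T x (β - α)).1 hxres
  have hTpos : 0 < T := Nat.pos_of_ne_zero (NeZero.ne T)
  have hkM : M ≤ k := by
    by_contra hlt
    push_neg at hlt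
    have hmul : T * k ≤ T * M := Nat.mul_le_mul_left T (by omega)
    omega
  have hx1 : 1 ≤ x := by omega
  have hU : (∑' kk : ℕ, kpow Γ (kk + 1) x α β) = MRT2.uK Γ x α β := by
    have hsum := MRT3.summable_kpow_Γ hΓ hsupp hsemi hposmat hν hinv hμ hμpos x α β
    have h0 : MRT2.uK Γ x α β = kpow Γ 0 x α β + ∑' kk : ℕ, kpow Γ (kk + 1) x α β :=
      Summable.tsum_eq_zero_add hsum
    have hz : kpow Γ 0 x α β = 0 := by
      rw [MRT.kpow_zero_apply]
      have : x ≠ 0 := by omega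
      simp [this]
    rw [h0, hz, zero_add]
  show x ∈ (fun x => ∑' k : ℕ, kpow Γ (k + 1) x α β) ⁻¹' s
  simp only [Set.mem_preimage]
  rw [hU]
  have hmem := hM k hkM
  simp only [Set.mem_preimage] at hmem
  rw [hk]
  exact hmem
end

section
/- Let S = ℤ/(TZ), h = 0, and Σ : S × S → ℝ with Σ_{α,β} = v_β − v_α for some v : S → ℝ (satisfied by the copolymer model), and suppose Σ is not identically zero, with additionally Σ_{α}(Σ_{α,α+[1]}) = 0. Define B_{α,β} := (1/2)(1+exp(Σ_{α,β})) q(β−α) for β−α ≠ [1] and B_{α,α+[1]} := K(1) + (1/2)(1+exp(Σ_{α,α+[1]}))(q([1]) − K(1)), where q(γ) = Σ_{x≡γ} K(x) > 0, 0 < K(1) < q([1]), Σ_γ q(γ) = 1. Then the Perron–Frobenius eigenvalue of B is strictly greater than 1. -/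
open Filter Matrix


noncomputable def auxQ (T : ℕ) (K : ℕ → ℝ) (γ : ZMod T) : ℝ :=
  ∑' x : ℕ, if (x : ZMod T) = γ then K x else 0

noncomputable def auxA (T : ℕ) (K : ℕ → ℝ) (γ : ZMod T) : ℝ :=
  if γ = 1 then (auxQ T K 1 + K 1) / 2 else auxQ T K γ / 2

noncomputable def auxB (T : ℕ) (K : ℕ → ℝ) (γ : ZMod T) : ℝ :=
  if γ = 1 then (auxQ T K 1 - K 1) / 2 else auxQ T K γ / 2

lemma auxAB (T : ℕ) (K : ℕ → ℝ) (γ : ZMod T) :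
    auxA T K γ + auxB T K γ = auxQ T K γ := by
  unfold auxA auxB
  split_ifs with h
  · subst h; ring
  · ring

lemma amgm_le {a b s : ℝ} (ha : 0 < a) (hb : 0 < b) :
    (a + b) * Real.exp (b / (a + b) * s) ≤ a + b * Real.exp s := by
  have hab : 0 < a + b := by linarith
  have h1 : a / (a + b) + b / (a + b) = 1 := by field_simp
  have h := convexOn_exp.2 (Set.mem_univ (0 : ℝ)) (Set.mem_univ s)
    (by positivity) (by positivity) h1
  simp only [smul_eq_mul, mul_zero, zero_add, Real.exp_zero, mul_one] at h
  have h2 := mul_le_mul_of_nonneg_left h hab.le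
  have h3 : (a + b) * (a / (a + b) + b / (a + b) * Real.exp s) = a + b * Real.exp s := by
    field_simp
  linarith

lemma amgm_lt {a b s : ℝ} (ha : 0 < a) (hb : 0 < b) (hs : s ≠ 0) :
    (a + b) * Real.exp (b / (a + b) * s) < a + b * Real.exp s := by
  have hab : 0 < a + b := by linarith
  have h1 : a / (a + b) + b / (a + b) = 1 := by field_simp
  have h := strictConvexOn_exp.2 (Set.mem_univ (0 : ℝ)) (Set.mem_univ s)
    (Ne.symm hs) (by positivity) (by positivity) h1
  simp only [smul_eq_mul, mul_zero, zero_add, Real.exp_zero, mul_one] at h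
  have h2 := (mul_lt_mul_iff_right₀ hab).mpr h
  have h3 : (a + b) * (a / (a + b) + b / (a + b) * Real.exp s) = a + b * Real.exp s := by
    field_simp
  linarith

lemma log_amgm_le {a b s : ℝ} (ha : 0 < a) (hb : 0 < b) :
    Real.log (a + b) + b / (a + b) * s ≤ Real.log (a + b * Real.exp s) := by
  have hab : 0 < a + b := by linarith
  have hpos : 0 < (a + b) * Real.exp (b / (a + b) * s) := by positivity
  have h := Real.log_le_log hpos (amgm_le ha hb (s := s))
  rwa [Real.log_mul hab.ne' (Real.exp_ne_zero _), Real.log_exp] at h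

lemma log_amgm_lt {a b s : ℝ} (ha : 0 < a) (hb : 0 < b) (hs : s ≠ 0) :
    Real.log (a + b) + b / (a + b) * s < Real.log (a + b * Real.exp s) := by
  have hab : 0 < a + b := by linarith
  have hpos : 0 < (a + b) * Real.exp (b / (a + b) * s) := by positivity
  have h := Real.log_lt_log hpos (amgm_lt ha hb hs)
  rwa [Real.log_mul hab.ne' (Real.exp_ne_zero _), Real.log_exp] at h

lemma card_mul_exp_le_sum_exp {ι : Type*} [Fintype ι] [Nonempty ι] (x : ι → ℝ) :
    (Fintype.card ι : ℝ) * Real.exp ((∑ i, x i) / (Fintype.card ι : ℝ)) ≤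
      ∑ i, Real.exp (x i) := by
  have hc : (0:ℝ) < (Fintype.card ι : ℝ) := by exact_mod_cast Fintype.card_pos
  have h := convexOn_exp.map_sum_le
    (t := Finset.univ) (w := fun _ : ι => (Fintype.card ι : ℝ)⁻¹) (p := x)
    (fun _ _ => by positivity)
    (by rw [Finset.sum_const, Finset.card_univ, nsmul_eq_mul]; field_simp)
    (fun _ _ => Set.mem_univ _)
  simp only [smul_eq_mul] at h
  rw [← Finset.mul_sum, ← Finset.mul_sum, inv_mul_eq_div] at h
  have h2 := mul_le_mul_of_nonneg_left h hc.le
  rwa [mul_inv_cancel_left₀ hc.ne'] at h2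

/-- Localization of the zero-mean nontrivial periodic copolymer.  On `S = ℤ/Tℤ`, let
`Σ_{α,β} = v_β - v_α` be a non-identically-zero matrix with
`Σ_α Σ_{α,α+1} = 0`, let `K` be the (strictly positive on `n ≥ 1`) first-return
probability law, `q(γ) = Σ_{x ≡ γ} K(x)` its pushforward to `ℤ/Tℤ` with
`K(1) < q(1)`, and define
`B_{α,β} = ½(1 + e^{Σ_{α,β}}) q(β-α)` for `β - α ≠ 1` and
`B_{α,α+1} = K(1) + ½(1 + e^{Σ_{α,α+1}})(q(1) - K(1))`.
Then the Perron–Frobenius eigenvalue of `B` (any eigenvalue with a strictly positive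
eigenvector) is strictly greater than `1`. -/
theorem periodic_copolymer_localized
    {T : ℕ} [NeZero T]
    (v : ZMod T → ℝ) (K : ℕ → ℝ)
    (hSigma_ne : ∃ α β : ZMod T, v β - v α ≠ 0)
    (hSigma_zero : ∑ α : ZMod T, (v (α + 1) - v α) = 0)
    (hK0 : K 0 = 0)
    (hKpos : ∀ n : ℕ, 1 ≤ n → 0 < K n)
    (hKsum : HasSum K 1)
    (hK1 : K 1 < ∑' x : ℕ, if (x : ZMod T) = 1 then K x else 0)
    (r : ℝ) (ξ : ZMod T → ℝ)
    (hξ : ∀ i, 0 < ξ i)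
    (heig : (Matrix.of fun α β : ZMod T =>
        if β - α = 1 then
          K 1 + (1 / 2) * (1 + Real.exp (v β - v α)) *
            ((∑' x : ℕ, if (x : ZMod T) = 1 then K x else 0) - K 1)
        else
          (1 / 2) * (1 + Real.exp (v β - v α)) *
            (∑' x : ℕ, if (x : ZMod T) = β - α then K x else 0)) *ᵥ ξ = r • ξ) :
    1 < r := by
  classical
  have hT : 0 < T := Nat.pos_of_ne_zero (NeZero.ne T)
  have hTR : (0:ℝ) < (T:ℝ) := by exact_mod_cast hT
  have hKnn : ∀ n, 0 ≤ K n := by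
    intro n
    match n with
    | 0 => simp [hK0]
    | (m+1) => exact (hKpos (m+1) (Nat.succ_le_succ (Nat.zero_le m))).le
  have hsummable : ∀ γ : ZMod T, Summable fun x : ℕ => if (x : ZMod T) = γ then K x else 0 := by
    intro γ
    refine Summable.of_nonneg_of_le (fun n => ?_) (fun n => ?_) hKsum.summable
    · split
      · exact hKnn n
      · exact le_rfl
    · split
      · exact le_rfl
      · exact hKnn n
  have hq_pos : ∀ γ : ZMod T, 0 < auxQ T K γ := by
    intro γ
    have h1 : ((γ.val + T : ℕ) : ZMod T) = γ := by
      rw [Nat.cast_add, ZMod.natCast_self, add_zero, ZMod.natCast_rightInverse γ]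
    have h3 := Summable.le_tsum (hsummable γ) (γ.val + T) (fun m _ => by
      split
      · exact hKnn m
      · exact le_rfl)
    rw [if_pos h1] at h3
    exact lt_of_lt_of_le (hKpos _ (by omega)) h3
  have hq1 : K 1 < auxQ T K 1 := hK1
  have hApos : ∀ γ, 0 < auxA T K γ := by
    intro γ; unfold auxA; split_ifs with h
    · have := hq_pos 1; have := hKpos 1 le_rfl; linarith
    · have := hq_pos γ; linarith
  have hBpos : ∀ γ, 0 < auxB T K γ := by
    intro γ; unfold auxB; split_ifs with h
    · linarith
    · have := hq_pos γ; linarith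
  have hq_sum : ∑ γ : ZMod T, auxQ T K γ = 1 := by
    unfold auxQ
    rw [← Summable.tsum_finsetSum (fun γ _ => hsummable γ)]
    have h : ∀ x : ℕ, (∑ γ : ZMod T, if (x : ZMod T) = γ then K x else 0) = K x := by
      intro x
      rw [Finset.sum_ite_eq]
      simp
    simp_rw [h]
    exact hKsum.tsum_eq
  -- matrix entries in A/B form
  have hEntry : ∀ α β : ZMod T,
      (if β - α = 1 then
          K 1 + (1 / 2) * (1 + Real.exp (v β - v α)) *
            ((∑' x : ℕ, if (x : ZMod T) = 1 then K x else 0) - K 1)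
        else
          (1 / 2) * (1 + Real.exp (v β - v α)) *
            (∑' x : ℕ, if (x : ZMod T) = β - α then K x else 0))
      = auxA T K (β - α) + auxB T K (β - α) * Real.exp (v β - v α) := by
    intro α β
    unfold auxA auxB auxQ
    split_ifs with h
    · ring
    · ring
  have heig' : ∀ α : ZMod T,
      ∑ β : ZMod T, (auxA T K (β - α) + auxB T K (β - α) * Real.exp (v β - v α)) * ξ β
        = r * ξ α := by
    intro α
    have h := congrFun heig α
    simp only [Matrix.mulVec, dotProduct, Matrix.of_apply, Pi.smul_apply,
      smul_eq_mul] at h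
    rw [← h]
    exact Finset.sum_congr rfl fun β _ => by rw [hEntry α β]
  -- telescoping
  have htel : ∀ (g : ZMod T → ℝ) (γ : ZMod T), ∑ α : ZMod T, g (α + γ) = ∑ α : ZMod T, g α := by
    intro g γ
    exact Fintype.sum_equiv (Equiv.addRight γ) _ _ (fun α => rfl)
  have hPpos : ∀ γ α : ZMod T,
      0 < auxA T K γ + auxB T K γ * Real.exp (v (α + γ) - v α) := by
    intro γ α
    have h1 := hApos γ; have h2 := hBpos γ
    positivity
  have hcard : (Fintype.card (ZMod T) : ℝ) = (T:ℝ) := by rw [ZMod.card]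
  -- lower bound on log sums
  have hlog_le : ∀ γ : ZMod T, (T:ℝ) * Real.log (auxQ T K γ) ≤
      ∑ α : ZMod T, Real.log (auxA T K γ + auxB T K γ * Real.exp (v (α + γ) - v α)) := by
    intro γ
    have hzero : ∑ α : ZMod T, (v (α + γ) - v α) = 0 := by
      rw [Finset.sum_sub_distrib, htel v γ, sub_self]
    calc (T:ℝ) * Real.log (auxQ T K γ)
        = ∑ α : ZMod T, (Real.log (auxQ T K γ)
            + auxB T K γ / auxQ T K γ * (v (α + γ) - v α)) := by
          rw [Finset.sum_add_distrib, Finset.sum_const, ← Finset.mul_sum, hzero, mul_zero,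
            add_zero, Finset.card_univ, ZMod.card, nsmul_eq_mul]
      _ ≤ _ := by
          refine Finset.sum_le_sum fun α _ => ?_
          have h := log_amgm_le (hApos γ) (hBpos γ) (s := v (α + γ) - v α)
          rwa [auxAB] at h
  -- the per-γ lower bound on the weighted sum
  have hS : ∀ γ : ZMod T, ∀ L : ℝ,
      L ≤ ∑ α : ZMod T, Real.log (auxA T K γ + auxB T K γ * Real.exp (v (α + γ) - v α)) →
      (T:ℝ) * Real.exp (L / T) ≤
        ∑ α : ZMod T, (auxA T K γ + auxB T K γ * Real.exp (v (α + γ) - v α))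
          * (ξ (α + γ) / ξ α) := by
    intro γ L hL
    have hterm : ∀ α : ZMod T,
        (auxA T K γ + auxB T K γ * Real.exp (v (α + γ) - v α)) * (ξ (α + γ) / ξ α)
          = Real.exp (Real.log (auxA T K γ + auxB T K γ * Real.exp (v (α + γ) - v α))
              + (Real.log (ξ (α + γ)) - Real.log (ξ α))) := by
      intro α
      rw [Real.exp_add, Real.exp_log (hPpos γ α), Real.exp_sub (Real.log (ξ (α + γ))) (Real.log (ξ α)), Real.exp_log (hξ _),
        Real.exp_log (hξ _)]
    have hJ := card_mul_exp_le_sum_exp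
      (fun α : ZMod T => Real.log (auxA T K γ + auxB T K γ * Real.exp (v (α + γ) - v α))
        + (Real.log (ξ (α + γ)) - Real.log (ξ α)))
    rw [hcard] at hJ
    have hsum : ∑ α : ZMod T,
        (Real.log (auxA T K γ + auxB T K γ * Real.exp (v (α + γ) - v α))
          + (Real.log (ξ (α + γ)) - Real.log (ξ α)))
        = ∑ α : ZMod T, Real.log (auxA T K γ + auxB T K γ * Real.exp (v (α + γ) - v α)) := by
      rw [Finset.sum_add_distrib, Finset.sum_sub_distrib,
        htel (fun α => Real.log (ξ α)) γ, sub_self, add_zero]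
    rw [hsum] at hJ
    calc (T:ℝ) * Real.exp (L / T)
        ≤ (T:ℝ) * Real.exp ((∑ α : ZMod T,
            Real.log (auxA T K γ + auxB T K γ * Real.exp (v (α + γ) - v α))) / T) := by
          apply mul_le_mul_of_nonneg_left _ hTR.le
          exact Real.exp_le_exp.mpr (by gcongr)
      _ ≤ _ := by
          refine le_trans hJ (le_of_eq ?_)
          exact Finset.sum_congr rfl fun α _ => (hterm α).symm
  -- nonstrict per-γ bound
  have hfinal_le : ∀ γ : ZMod T, (T:ℝ) * auxQ T K γ ≤
      ∑ α : ZMod T, (auxA T K γ + auxB T K γ * Real.exp (v (α + γ) - v α))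
        * (ξ (α + γ) / ξ α) := by
    intro γ
    have h := hS γ _ (hlog_le γ)
    rwa [mul_div_cancel_left₀ _ hTR.ne', Real.exp_log (hq_pos γ)] at h
  -- strict bound at γ0
  obtain ⟨α0, β0, hne⟩ := hSigma_ne
  have hs0 : v (α0 + (β0 - α0)) - v α0 ≠ 0 := by
    have h : α0 + (β0 - α0) = β0 := by ring
    rw [h]; exact hne
  have hlog_lt : (T:ℝ) * Real.log (auxQ T K (β0 - α0)) <
      ∑ α : ZMod T, Real.log (auxA T K (β0 - α0)
        + auxB T K (β0 - α0) * Real.exp (v (α + (β0 - α0)) - v α)) := by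
    set γ := β0 - α0
    have hzero : ∑ α : ZMod T, (v (α + γ) - v α) = 0 := by
      rw [Finset.sum_sub_distrib, htel v γ, sub_self]
    calc (T:ℝ) * Real.log (auxQ T K γ)
        = ∑ α : ZMod T, (Real.log (auxQ T K γ)
            + auxB T K γ / auxQ T K γ * (v (α + γ) - v α)) := by
          rw [Finset.sum_add_distrib, Finset.sum_const, ← Finset.mul_sum, hzero, mul_zero,
            add_zero, Finset.card_univ, ZMod.card, nsmul_eq_mul]
      _ < _ := by
          refine Finset.sum_lt_sum (fun α _ => ?_) ⟨α0, Finset.mem_univ _, ?_⟩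
          · have h := log_amgm_le (hApos γ) (hBpos γ) (s := v (α + γ) - v α)
            rwa [auxAB] at h
          · have h := log_amgm_lt (hApos γ) (hBpos γ) hs0
            rwa [auxAB] at h
  have hfinal_lt : (T:ℝ) * auxQ T K (β0 - α0) <
      ∑ α : ZMod T, (auxA T K (β0 - α0)
        + auxB T K (β0 - α0) * Real.exp (v (α + (β0 - α0)) - v α)) * (ξ (α + (β0 - α0)) / ξ α) := by
    refine lt_of_lt_of_le ?_ (hS (β0 - α0) _ le_rfl)
    have h1 : Real.log (auxQ T K (β0 - α0)) <
        (∑ α : ZMod T, Real.log (auxA T K (β0 - α0)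
          + auxB T K (β0 - α0) * Real.exp (v (α + (β0 - α0)) - v α))) / T := by
      rw [lt_div_iff₀ hTR, mul_comm]
      exact hlog_lt
    have h2 := Real.exp_lt_exp.mpr h1
    rw [Real.exp_log (hq_pos _)] at h2
    exact (mul_lt_mul_iff_right₀ hTR).mpr h2
  -- total sum equals T * r
  have hsumS : (∑ γ : ZMod T, ∑ α : ZMod T,
      (auxA T K γ + auxB T K γ * Real.exp (v (α + γ) - v α)) * (ξ (α + γ) / ξ α))
      = (T:ℝ) * r := by
    rw [Finset.sum_comm]
    calc ∑ α : ZMod T, ∑ γ : ZMod T,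
          (auxA T K γ + auxB T K γ * Real.exp (v (α + γ) - v α)) * (ξ (α + γ) / ξ α)
        = ∑ α : ZMod T, ∑ β : ZMod T,
            (auxA T K (β - α) + auxB T K (β - α) * Real.exp (v β - v α)) * (ξ β / ξ α) := by
          refine Finset.sum_congr rfl fun α _ => ?_
          refine Fintype.sum_equiv (Equiv.addLeft α) _ _ fun γ => ?_
          simp [add_sub_cancel_left]
      _ = ∑ α : ZMod T, (∑ β : ZMod T,
            (auxA T K (β - α) + auxB T K (β - α) * Real.exp (v β - v α)) * ξ β) / ξ α := by
          refine Finset.sum_congr rfl fun α _ => ?_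
          rw [Finset.sum_div]
          exact Finset.sum_congr rfl fun β _ => (mul_div_assoc _ _ _).symm
      _ = ∑ α : ZMod T, (r * ξ α) / ξ α := by
          refine Finset.sum_congr rfl fun α _ => ?_
          rw [heig' α]
      _ = ∑ α : ZMod T, r := by
          refine Finset.sum_congr rfl fun α _ => ?_
          exact mul_div_cancel_right₀ r (hξ α).ne'
      _ = (T:ℝ) * r := by
          rw [Finset.sum_const, Finset.card_univ, ZMod.card, nsmul_eq_mul]
  have hmain : (T:ℝ) * 1 < (T:ℝ) * r := by
    rw [mul_one]
    calc (T:ℝ) = ∑ γ : ZMod T, (T:ℝ) * auxQ T K γ := by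
          rw [← Finset.mul_sum, hq_sum, mul_one]
      _ < ∑ γ : ZMod T, ∑ α : ZMod T,
            (auxA T K γ + auxB T K γ * Real.exp (v (α + γ) - v α)) * (ξ (α + γ) / ξ α) :=
          Finset.sum_lt_sum (fun γ _ => hfinal_le γ) ⟨β0 - α0, Finset.mem_univ _, hfinal_lt⟩
      _ = (T:ℝ) * r := hsumS
  exact (mul_lt_mul_iff_right₀ hTR).mp hmain
end
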